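/- arXiv:2307.11002 — 15 statements merged into one kernel-verified Lean document; each statement's English description precedes it below -/
import Mathlib

section
/- Let X be a set with a left action of the monoid M of injective self-maps of ω = {1,2,3,...}. Let A ⊆ ω be co-infinite (its complement is infinite) and let x ∈ X be fixed by every element of M that fixes A pointwise. Then for any f, g ∈ M that agree on A, we have f.x = g.x. -/
/-- The monoid of injective self-maps of ω (modelled as ℕ), under composition. -/
def M : Submonoid (Function.End ℕ) where
  carrier := {f | Function.Injective f}
  mul_mem' := fun hf hg => hf.comp hg
  one_mem' := fun _ _ h => h

/-- `x` is supported on `A` if it is fixed by every injection fixing `A` pointwise. -/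
def Supported {X : Type*} [MulAction M X] (A : Set ℕ) (x : X) : Prop :=
  ∀ u : M, (∀ a ∈ A, u.1 a = a) → u • x = x

/-!
If `f` and `g` agree on `A` and `f '' Aᶜ ∩ g '' Aᶜ` is infinite, choose an injection `w` equal to
`f` on `A` that maps `Aᶜ` into that intersection. Then `w = f ∘ u = g ∘ v` with `u`, `v` fixing `A`,
so `f • x = w • x = g • x`. In general, pass through an `h` equal to `f` on `A` that maps `Aᶜ`
onto `f '' Aᶜ ∪ g '' Aᶜ`: its image of `Aᶜ` meets both `f '' Aᶜ` and `g '' Aᶜ` in infinite sets.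
-/

open Function Set

theorem exists_injective_eqOn_image_compl_eq {α β : Type*} [Countable α] [Countable β]
    {s : Set α} {t : Set β} {f : α → β} (hf : InjOn f s) (hs : sᶜ.Infinite) (ht : t.Infinite)
    (hdisj : Disjoint (f '' s) t) : ∃ w : α → β, Injective w ∧ EqOn w f s ∧ w '' sᶜ = t := by
  classical
  have := hs.to_subtype
  have := ht.to_subtype
  obtain ⟨e⟩ : Nonempty (↥sᶜ ≃ t) := nonempty_equiv_of_countable
  let w : α → β := fun a => if h : a ∈ s then f a else e ⟨a, h⟩
  have hw_compl : ∀ a (ha : a ∉ s), w a = e ⟨a, ha⟩ := fun a ha => dif_neg ha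
  have hw_eqOn : EqOn w f s := fun a ha => dif_pos ha
  have hw_ne : ∀ a ∈ s, ∀ b (hb : b ∉ s), w a ≠ w b := fun a ha b hb hab =>
    disjoint_left.mp hdisj (mem_image_of_mem f ha) <|
      (hw_eqOn ha).symm.trans (hab.trans (hw_compl b hb)) ▸ (e ⟨b, hb⟩).2
  refine ⟨w, fun a b hab => ?_, hw_eqOn, ?_⟩
  · by_cases ha : a ∈ s <;> by_cases hb : b ∈ s
    · exact hf ha hb (by rwa [hw_eqOn ha, hw_eqOn hb] at hab)
    · exact absurd hab (hw_ne a ha b hb)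
    · exact absurd hab.symm (hw_ne b hb a ha)
    · rw [hw_compl a ha, hw_compl b hb, SetCoe.ext_iff, e.apply_eq_iff_eq] at hab
      exact congrArg Subtype.val hab
  · ext y
    constructor
    · rintro ⟨a, ha, rfl⟩
      exact hw_compl a ha ▸ (e ⟨a, ha⟩).2
    · intro hy
      exact ⟨e.symm ⟨y, hy⟩, (e.symm ⟨y, hy⟩).2, by
        rw [hw_compl _ (e.symm ⟨y, hy⟩).2]; simp⟩

namespace Supported

variable {X : Type*} [MulAction M X] {A : Set ℕ} {x : X}

theorem smul_eq_of_eqOn_of_image_compl_subset (hx : Supported A x) {p w : M}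
    (hwp : EqOn w.1 p.1 A) (himage : w.1 '' Aᶜ ⊆ range p.1) : w • x = p • x := by
  have hrange : range w.1 ⊆ range p.1 := by
    rintro _ ⟨n, rfl⟩
    by_cases hn : n ∈ A
    · exact ⟨n, (hwp hn).symm⟩
    · exact himage ⟨n, hn, rfl⟩
  obtain ⟨u, hu⟩ := range_subset_range_iff_exists_comp.mp hrange
  have hw : Injective (p.1 ∘ u) := hu ▸ w.2
  have hu_fix : ∀ a ∈ A, u a = a := fun a ha =>
    p.2 <| (congrFun hu a).symm.trans (hwp ha)
  calc w • x = (p * ⟨u, hw.of_comp⟩) • x := congrArg (· • x) (Subtype.ext hu)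
    _ = p • x := by rw [mul_smul, hx ⟨u, hw.of_comp⟩ hu_fix]

theorem smul_eq_of_eqOn_of_infinite_inter (hx : Supported A x) (hA : Aᶜ.Infinite) {f g : M}
    (hfg : EqOn f.1 g.1 A) (hinter : (f.1 '' Aᶜ ∩ g.1 '' Aᶜ).Infinite) : f • x = g • x := by
  have hdisj : Disjoint (f.1 '' A) (f.1 '' Aᶜ ∩ g.1 '' Aᶜ) :=
    ((disjoint_image_iff f.2).mpr disjoint_compl_right).mono_right inter_subset_left
  obtain ⟨w, hw, hwf, hw_compl⟩ := exists_injective_eqOn_image_compl_eq f.2.injOn hA hinter hdisj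
  calc f • x = (⟨w, hw⟩ : M) • x :=
        (hx.smul_eq_of_eqOn_of_image_compl_subset hwf <|
          hw_compl ▸ inter_subset_left.trans (image_subset_range _ _)).symm
    _ = g • x :=
        hx.smul_eq_of_eqOn_of_image_compl_subset (hwf.trans hfg) <|
          hw_compl ▸ inter_subset_right.trans (image_subset_range _ _)

end Supported

theorem stmt_0 {X : Type*} [MulAction M X] (A : Set ℕ) (hA : (Aᶜ : Set ℕ).Infinite)
    (x : X) (hx : Supported A x) (f g : M) (hfg : ∀ a ∈ A, f.1 a = g.1 a) :
    f • x = g • x := by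
  have hf_image : (f.1 '' Aᶜ).Infinite := hA.image f.2.injOn
  have hg_image : (g.1 '' Aᶜ).Infinite := hA.image g.2.injOn
  have hdisj : Disjoint (f.1 '' A) (f.1 '' Aᶜ ∪ g.1 '' Aᶜ) := by
    refine disjoint_union_right.mpr ⟨(disjoint_image_iff f.2).mpr disjoint_compl_right, ?_⟩
    rw [image_congr hfg]
    exact (disjoint_image_iff g.2).mpr disjoint_compl_right
  obtain ⟨h, hh, hhf, hh_image⟩ := exists_injective_eqOn_image_compl_eq f.2.injOn hA
    (hf_image.mono subset_union_left) hdisj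
  calc f • x = (⟨h, hh⟩ : M) • x :=
        hx.smul_eq_of_eqOn_of_infinite_inter hA (fun a ha => (hhf ha).symm) <| by
          rw [hh_image, inter_eq_left.mpr subset_union_left]
          exact hf_image
    _ = g • x :=
        hx.smul_eq_of_eqOn_of_infinite_inter hA (fun a ha => (hhf ha).trans (hfg a ha)) <| by
          rw [hh_image, inter_eq_right.mpr subset_union_right]
          exact hg_image
end

section
/- Let X be an M-set, A ⊆ ω co-infinite, and x ∈ X supported on A. Then for every f ∈ M, the element f.x is supported on f(A). -/
open Function Set

theorem Set.Infinite.exists_bijOn {α β : Type*} [Countable α] [Countable β] {s : Set α}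
    {t : Set β} (hs : s.Infinite) (ht : t.Infinite) : ∃ φ : α → β, BijOn φ s t := by
  classical
  have := hs.to_subtype
  have := ht.to_subtype
  obtain ⟨e⟩ : Nonempty (s ≃ t) := nonempty_equiv_of_countable
  obtain ⟨b, -⟩ := ht.nonempty
  refine ⟨fun a => if h : a ∈ s then e ⟨a, h⟩ else b, fun a ha => by simp [ha],
    fun a ha a' ha' h => ?_, fun c hc => ⟨e.symm ⟨c, hc⟩, by simp⟩⟩
  exact congrArg Subtype.val (e.injective (Subtype.ext (by simpa [ha, ha'] using h)))

theorem exists_M_eqOn_eqOn_compl {A : Set ℕ} {g φ : ℕ → ℕ} (hg : InjOn g A) (hφ : InjOn φ Aᶜ)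
    (hdisj : Disjoint (g '' A) (φ '' Aᶜ)) : ∃ m : M, EqOn m.1 g A ∧ EqOn m.1 φ Aᶜ := by
  classical
  refine ⟨⟨A.piecewise g φ, (injective_piecewise_iff A).2 ⟨hg, hφ, fun a ha b hb h => ?_⟩⟩,
    piecewise_eqOn _ _ _, piecewise_eqOn_compl _ _ _⟩
  exact disjoint_left.1 hdisj (mem_image_of_mem g ha) (h ▸ mem_image_of_mem φ hb)

theorem exists_M_fixing_comp_eqOn {A : Set ℕ} {g φ : ℕ → ℕ} (hφ : InjOn φ Aᶜ)
    (hmaps : MapsTo φ Aᶜ (g '' Aᶜ)) :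
    ∃ s : M, (∀ a ∈ A, s.1 a = a) ∧ EqOn (g ∘ s.1) φ Aᶜ := by
  set σ := invFunOn g Aᶜ ∘ φ
  have hgσ : EqOn (g ∘ σ) φ Aᶜ := fun n hn => invFunOn_eq (hmaps hn)
  have hσ : MapsTo σ Aᶜ Aᶜ := fun n hn => invFunOn_mem (hmaps hn)
  obtain ⟨s, hsA, hsσ⟩ := exists_M_eqOn_eqOn_compl (injOn_id A) (hφ.congr hgσ.symm).of_comp
    (by rw [image_id]; exact disjoint_compl_right.mono_right hσ.image_subset)
  exact ⟨s, hsA, fun n hn => (congrArg g (hsσ hn)).trans (hgσ hn)⟩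

theorem Supported.smul_eq_smul_of_mul_eq {X : Type*} [MulAction M X] {A : Set ℕ} {x : X}
    (hx : Supported A x) {g h s t : M} (hs : ∀ a ∈ A, s.1 a = a) (ht : ∀ a ∈ A, t.1 a = a)
    (hst : g * s = h * t) : g • x = h • x :=
  calc g • x = g • s • x := by rw [hx s hs]
    _ = h • t • x := by rw [← mul_smul, hst, mul_smul]
    _ = h • x := by rw [hx t ht]

theorem Supported.smul_eq_smul {X : Type*} [MulAction M X] {A : Set ℕ} {x : X}
    (hx : Supported A x) {g h : M} (hgh : EqOn g.1 h.1 A)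
    (hinf : (g.1 '' Aᶜ ∩ h.1 '' Aᶜ).Infinite) : g • x = h • x := by
  obtain ⟨φ, hφ⟩ := ((hinf.mono inter_subset_left).of_image g.1).exists_bijOn hinf
  obtain ⟨s, hsA, hgs⟩ := exists_M_fixing_comp_eqOn hφ.injOn fun n hn => (hφ.mapsTo hn).1
  obtain ⟨t, htA, hht⟩ := exists_M_fixing_comp_eqOn hφ.injOn fun n hn => (hφ.mapsTo hn).2
  refine hx.smul_eq_smul_of_mul_eq hsA htA (Subtype.ext (funext fun n => ?_))
  show g.1 (s.1 n) = h.1 (t.1 n)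
  by_cases hn : n ∈ A
  · rw [hsA n hn, htA n hn, hgh hn]
  · exact (hgs hn).trans (hht hn).symm

theorem stmt_1 {X : Type*} [MulAction M X] (A : Set ℕ) (hA : (Aᶜ : Set ℕ).Infinite)
    (x : X) (hx : Supported A x) (f : M) :
    Supported (f.1 '' A) (f • x) := by
  intro u hu
  have hufA : EqOn (u * f).1 f.1 A := fun a ha => hu _ (mem_image_of_mem _ ha)
  have hfB : (f.1 '' Aᶜ).Infinite := hA.image f.2.injOn
  obtain ⟨φ, hφ⟩ := hA.exists_bijOn (hfB.mono (subset_union_left (t := (u * f).1 '' Aᶜ)))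
  obtain ⟨m, hmA, hmB⟩ := exists_M_eqOn_eqOn_compl f.2.injOn hφ.injOn <| by
    rw [hφ.image_eq, disjoint_union_right]
    refine ⟨(disjoint_image_iff f.2).2 disjoint_compl_right, ?_⟩
    rw [← hufA.image_eq]
    exact (disjoint_image_iff (u * f).2).2 disjoint_compl_right
  have hmimage : m.1 '' Aᶜ = f.1 '' Aᶜ ∪ (u * f).1 '' Aᶜ := hmB.image_eq.trans hφ.image_eq
  have hmf : m • x = f • x := hx.smul_eq_smul hmA <| by
    rwa [hmimage, union_inter_cancel_left]
  have hmuf : m • x = (u * f) • x := hx.smul_eq_smul (hmA.trans hufA.symm) <| by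
    rw [hmimage, union_inter_cancel_right]
    exact hA.image (u * f).2.injOn
  rw [← mul_smul, ← hmuf, hmf]
end

section
/- Let X be an M-set, A ⊆ ω co-infinite, A' ⊆ A, and x ∈ X supported on A. If for some f ∈ M the element f.x is supported on f(A'), then x is supported on A'. -/
theorem Set.Infinite.compl_image {α β : Type*} {f : α → β} (hf : Function.Injective f)
    {s : Set α} (hs : sᶜ.Infinite) : (f '' s)ᶜ.Infinite :=
  (hs.image hf.injOn).mono (Set.image_compl_subset hf)

theorem Equiv.exists_perm_extend_of_infinite_compl {α : Type*} [Countable α] {s t : Set α}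
    (hs : sᶜ.Infinite) (ht : tᶜ.Infinite) (e : s ≃ t) :
    ∃ σ : Equiv.Perm α, ∀ a : s, σ a = e a := by
  classical
  have := hs.to_subtype
  have := ht.to_subtype
  obtain ⟨ec⟩ : Nonempty ((sᶜ : Set α) ≃ (tᶜ : Set α)) := nonempty_equiv_of_countable
  exact ⟨e.subtypeCongr ec, fun a => by simp [Equiv.subtypeCongr]⟩

theorem exists_perm_leftInvOn_of_infinite_compl {α : Type*} [Countable α] {s : Set α}
    (hs : sᶜ.Infinite) {f : α → α} (hf : Function.Injective f) :
    ∃ σ : Equiv.Perm α, Set.LeftInvOn σ f s := by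
  obtain ⟨σ, hσ⟩ := Equiv.exists_perm_extend_of_infinite_compl (hs.compl_image hf) hs
    (Equiv.Set.image f s hf).symm
  exact ⟨σ, fun a ha =>
    (hσ _).trans (congrArg Subtype.val (Equiv.Set.image_symm_apply f s hf a ⟨a, ha, rfl⟩))⟩

namespace M

def ofPerm (σ : Equiv.Perm ℕ) : M := ⟨(σ : ℕ → ℕ), σ.injective⟩

def conj (σ : Equiv.Perm ℕ) (u : M) : M :=
  ⟨σ.symm ∘ u.1 ∘ σ, σ.symm.injective.comp (u.2.comp σ.injective)⟩

theorem mul_ofPerm (σ : Equiv.Perm ℕ) (u : M) : u * ofPerm σ = ofPerm σ * conj σ u :=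
  Subtype.ext <| funext fun n =>
    show u.1 (σ n) = σ (σ.symm (u.1 (σ n))) from (σ.apply_symm_apply _).symm

end M

theorem Supported.ofPerm_smul {X : Type*} [MulAction M X] {B : Set ℕ} {y : X}
    (hy : Supported B y) (σ : Equiv.Perm ℕ) : Supported (σ '' B) (M.ofPerm σ • y) := by
  intro u hu
  have hconj : M.conj σ u • y = y := hy _ fun b hb => by
    change σ.symm (u.1 (σ b)) = b
    rw [hu _ ⟨b, hb, rfl⟩, σ.symm_apply_apply]
  rw [smul_smul, M.mul_ofPerm, mul_smul, hconj]

theorem stmt_2 {X : Type*} [MulAction M X] (A A' : Set ℕ) (hA : (Aᶜ : Set ℕ).Infinite)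
    (hA' : A' ⊆ A) (x : X) (hx : Supported A x) (f : M)
    (h : Supported (f.1 '' A') (f • x)) :
    Supported A' x := by
  obtain ⟨σ, hσ⟩ := exists_perm_leftInvOn_of_infinite_compl hA f.2
  have hx_eq : M.ofPerm σ • f • x = x := by
    rw [smul_smul]
    exact hx _ fun _ ha => hσ ha
  have hA'_eq : σ '' (f.1 '' A') = A' := hσ.image_image' hA'
  simpa only [hx_eq, hA'_eq] using h.ofPerm_smul σ
end

section
/- Let X be an M-set, let A, B ⊆ ω be co-infinite sets, and let x ∈ X be supported on both A and B. Then x is supported on A ∩ B. -/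
open Set Function

namespace Set.Infinite

variable {α : Type*}

lemma exists_injective_forall_mem {S : Set α} (hS : S.Infinite) :
    ∃ f : ℕ → α, Injective f ∧ ∀ n, f n ∈ S :=
  ⟨fun n => hS.natEmbedding S n, Subtype.val_injective.comp (hS.natEmbedding S).injective,
    fun n => (hS.natEmbedding S n).2⟩

lemma exists_disjoint_infinite_subsets {S : Set α} (hS : S.Infinite) :
    ∃ D ⊆ S, ∃ E ⊆ S, D.Infinite ∧ E.Infinite ∧ Disjoint D E := by
  obtain ⟨f, hf, hfS⟩ := hS.exists_injective_forall_mem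
  refine ⟨range fun n => f (2 * n), range_subset_iff.2 fun n => hfS _,
    range fun n => f (2 * n + 1), range_subset_iff.2 fun n => hfS _,
    infinite_range_of_injective fun m n h => by have := hf h; omega,
    infinite_range_of_injective fun m n h => by have := hf h; omega, ?_⟩
  rw [disjoint_range_iff]
  intro m n h
  have := hf h
  omega

lemma exists_disjoint_infinite_subsets₂ {S T : Set α} (hS : S.Infinite) (hT : T.Infinite) :
    ∃ D ⊆ S, ∃ E ⊆ T, D.Infinite ∧ E.Infinite ∧ Disjoint D E := by
  by_cases hST : (S \ T).Infinite
  · exact ⟨S \ T, sdiff_subset, T, subset_rfl, hST, hT, disjoint_sdiff_left⟩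
  · have hinter : (S ∩ T).Infinite := by
      simpa only [sdiff_sdiff_right_self] using hS.sdiff (not_infinite.1 hST)
    obtain ⟨D, hD, E, hE, hDinf, hEinf, hDE⟩ := hinter.exists_disjoint_infinite_subsets
    exact ⟨D, hD.trans inter_subset_left, E, hE.trans inter_subset_right, hDinf, hEinf, hDE⟩

end Set.Infinite

lemma exists_injective_eqOn_image_compl {α : Type*} [Countable α] {A : Set α} {f : α → α}
    (hf : InjOn f A) (hA : Aᶜ.Infinite) (hfA : (f '' A)ᶜ.Infinite) :
    ∃ g : α → α, Injective g ∧ EqOn g f A ∧ g '' Aᶜ = (f '' A)ᶜ := by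
  classical
  have := hA.to_subtype
  have := hfA.to_subtype
  obtain ⟨φ⟩ := nonempty_equiv_of_countable (α := ↥Aᶜ) (β := ↥(f '' A)ᶜ)
  refine ⟨fun a => if ha : a ∈ A then f a else φ ⟨a, ha⟩, ?_, fun a ha => dif_pos ha, ?_⟩
  · intro a b hab
    by_cases ha : a ∈ A <;> by_cases hb : b ∈ A <;> simp only [ha, hb, dite_true, dite_false] at hab
    · exact hf ha hb hab
    · exact absurd (mem_image_of_mem f ha) (hab ▸ (φ ⟨b, hb⟩).2)
    · exact absurd (mem_image_of_mem f hb) (hab ▸ (φ ⟨a, ha⟩).2)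
    · exact congrArg Subtype.val (φ.injective (Subtype.ext hab))
  · ext y
    constructor
    · rintro ⟨a, ha, rfl⟩
      simpa only [dif_neg ha] using (φ ⟨a, ha⟩).2
    · intro hy
      refine ⟨φ.symm ⟨y, hy⟩, (φ.symm ⟨y, hy⟩).2, ?_⟩
      simp only [dif_neg (φ.symm ⟨y, hy⟩).2, Subtype.coe_eta, Equiv.apply_symm_apply]

namespace Supported

variable {X : Type*} [MulAction M X] {A : Set ℕ} {x : X}

lemma smul_eq_smul_of_eqOn_of_image_compl_subset (hx : Supported A x) {s t : M}
    (hst : EqOn s.1 t.1 A) (hsub : s.1 '' Aᶜ ⊆ t.1 '' Aᶜ) : s • x = t • x := by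
  classical
  choose! g hgA hg using fun n (hn : n ∉ A) => hsub ⟨n, hn, rfl⟩
  have hw : Injective (A.piecewise id g) := by
    refine (injective_piecewise_iff A).2 ⟨injOn_id A, fun a ha b hb hab => ?_,
      fun a ha b hb hab => hgA b hb (hab ▸ ha)⟩
    exact s.2 (by rw [← hg a ha, ← hg b hb, hab])
  have hfac : t * ⟨_, hw⟩ = s := by
    refine Subtype.ext (funext fun n => ?_)
    by_cases hn : n ∈ A
    · exact (congrArg t.1 (piecewise_eq_of_mem A id g hn)).trans (hst hn).symm
    · exact (congrArg t.1 (piecewise_eq_of_notMem A id g hn)).trans (hg n hn)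
  rw [← hfac, mul_smul, hx _ fun a ha => piecewise_eq_of_mem A id g ha]

lemma smul_eq_smul_of_eqOn (hx : Supported A x) (hA : Aᶜ.Infinite) {s t : M}
    (hst : EqOn s.1 t.1 A) : s • x = t • x := by
  have hs : Injective s.1 := s.2
  obtain ⟨r, hr, hrs, hrA⟩ := exists_injective_eqOn_image_compl hs.injOn hA
    ((hA.image hs.injOn).mono (image_compl_subset hs))
  have key : ∀ v : M, EqOn v.1 s.1 A → v • x = (⟨r, hr⟩ : M) • x := fun v hv =>
    hx.smul_eq_smul_of_eqOn_of_image_compl_subset (hv.trans hrs.symm)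
      (by rw [hrA, ← hv.image_eq]; exact image_compl_subset v.2)
  exact (key s (eqOn_refl _ _)).trans (key t hst.symm).symm

end Supported

lemma exists_alternating_eqOn_chain {A B : Set ℕ} (hA : Aᶜ.Infinite) (hB : Bᶜ.Infinite) (u : M)
    (hu : ∀ a ∈ A ∩ B, u.1 a = a) :
    ∃ U₁ U₂ U₃ : M, EqOn u.1 U₁.1 A ∧ EqOn U₁.1 U₂.1 B ∧ EqOn U₂.1 U₃.1 A ∧
      ∀ b ∈ B, U₃.1 b = b := by
  classical
  have hu' : Injective u.1 := u.2
  obtain ⟨D, hD, E, hE, hDinf, hEinf, hDE⟩ := Infinite.exists_disjoint_infinite_subsets₂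
    ((hA.image hu'.injOn).mono (image_compl_subset hu')) hB
  obtain ⟨d, hd, hdD⟩ := hDinf.exists_injective_forall_mem
  obtain ⟨e, he, heE⟩ := hEinf.exists_injective_forall_mem
  let U₁ : M := ⟨A.piecewise u.1 d, (injective_piecewise_iff A).2 ⟨hu'.injOn, hd.injOn,
    fun a ha b _ hab => hD (hdD b) (hab ▸ mem_image_of_mem _ ha)⟩⟩
  let U₃ : M := ⟨B.piecewise id e, (injective_piecewise_iff B).2 ⟨injOn_id B, he.injOn,
    fun a ha b _ hab => hE (heE b) (hab ▸ ha)⟩⟩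
  have hU₁₃ : ∀ a ∈ B, ∀ b ∉ B, U₁.1 a ≠ U₃.1 b := by
    intro a ha b hb hab
    rw [show U₃.1 b = e b from piecewise_eq_of_notMem B id e hb] at hab
    by_cases haA : a ∈ A
    · rw [show U₁.1 a = a from (piecewise_eq_of_mem A _ d haA).trans (hu a ⟨haA, ha⟩)] at hab
      exact hE (heE b) (hab ▸ ha)
    · rw [show U₁.1 a = d a from piecewise_eq_of_notMem A _ d haA] at hab
      exact hDE.ne_of_mem (hdD a) (heE b) hab
  let U₂ : M := ⟨B.piecewise U₁.1 U₃.1,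
    (injective_piecewise_iff B).2 ⟨U₁.2.injOn, U₃.2.injOn, hU₁₃⟩⟩
  refine ⟨U₁, U₂, U₃, (piecewise_eqOn A u.1 d).symm, (piecewise_eqOn B U₁.1 U₃.1).symm,
    fun a ha => ?_, fun b hb => piecewise_eq_of_mem B id e hb⟩
  by_cases hb : a ∈ B
  · refine (piecewise_eq_of_mem B _ _ hb).trans ?_
    rw [show U₁.1 a = u.1 a from piecewise_eq_of_mem A _ d ha, hu a ⟨ha, hb⟩]
    exact (piecewise_eq_of_mem B id e hb).symm
  · exact piecewise_eq_of_notMem B _ _ hb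

theorem stmt_3 {X : Type*} [MulAction M X] (A B : Set ℕ)
    (hA : (Aᶜ : Set ℕ).Infinite) (hB : (Bᶜ : Set ℕ).Infinite)
    (x : X) (hxA : Supported A x) (hxB : Supported B x) :
    Supported (A ∩ B) x := by
  intro u hu
  obtain ⟨U₁, U₂, U₃, h₁, h₂, h₃, hU₃⟩ := exists_alternating_eqOn_chain hA hB u hu
  calc u • x = U₁ • x := hxA.smul_eq_smul_of_eqOn hA h₁
    _ = U₂ • x := hxB.smul_eq_smul_of_eqOn hB h₂
    _ = U₃ • x := hxA.smul_eq_smul_of_eqOn hA h₃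
    _ = x := hxB U₃ hU₃
end

section
/- Define on the monoid M of injective self-maps of ω the equivalence relation f ∼ g iff f(2x) = g(2x) for all but finitely many x ∈ ω, and let X = M/∼ with the M-action induced by left multiplication. Then the class [id] ∈ X is supported on each set A_n = {k ∈ ω : k even, k ≥ 2n} (each of which is co-infinite), but [id] is not supported on the empty set, i.e., [id] is not fixed by all of M. -/
/-- The equivalence relation `f ∼ g` iff `f (2x) = g (2x)` for all but finitely many `x`. -/
def eqrel : Setoid M where
  r f g := {x : ℕ | f.1 (2*x) ≠ g.1 (2*x)}.Finite
  iseqv := by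
    constructor
    · intro f; simp
    · intro f g h
      have : {x : ℕ | g.1 (2*x) ≠ f.1 (2*x)} ⊆ {x : ℕ | f.1 (2*x) ≠ g.1 (2*x)} := by
        intro x hx; exact fun he => hx he.symm
      exact h.subset this
    · intro f g h hfg hgh
      refine (hfg.union hgh).subset ?_
      intro x hx
      by_contra hc
      simp only [Set.mem_union, Set.mem_setOf_eq, not_or, not_not] at hc
      exact hx (hc.1.trans hc.2)

/-- The `M`-action on the quotient `M/∼` induced by left multiplication. -/
instance : MulAction M (Quotient eqrel) where
  smul u := Quotient.map (fun f => u * f) (by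
    intro f g h
    refine h.subset ?_
    intro x hx
    exact fun he => hx (congrArg u.1 he))
  one_smul x := Quotient.inductionOn x fun f => congrArg (Quotient.mk eqrel) (one_mul f)
  mul_smul u v x := Quotient.inductionOn x fun f =>
    congrArg (Quotient.mk eqrel) (mul_assoc u v f)

def succM : M := ⟨Nat.succ, Nat.succ_injective⟩

theorem smul_mk (u f : M) : u • Quotient.mk eqrel f = Quotient.mk eqrel (u * f) := rfl

theorem smul_mk_eq_mk_iff (u f : M) :
    u • Quotient.mk eqrel f = Quotient.mk eqrel f ↔
      {x : ℕ | u.1 (f.1 (2*x)) ≠ f.1 (2*x)}.Finite := by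
  rw [smul_mk]
  exact Quotient.eq

theorem supported_mk_of_finite {A : Set ℕ} {f : M} (hf : {x : ℕ | f.1 (2*x) ∉ A}.Finite) :
    Supported A (Quotient.mk eqrel f) := by
  intro u hu
  rw [smul_mk_eq_mk_iff]
  exact hf.subset fun x hx hA => hx (hu _ hA)

theorem not_supported_empty_mk (f : M) : ¬ Supported (∅ : Set ℕ) (Quotient.mk eqrel f) := by
  intro h
  have hfin := (smul_mk_eq_mk_iff succM f).mp (h succM fun _ ha => ha.elim)
  have huniv : {x : ℕ | succM.1 (f.1 (2*x)) ≠ f.1 (2*x)} = Set.univ :=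
    Set.eq_univ_of_forall fun x => Nat.succ_ne_self _
  exact Set.infinite_univ (huniv ▸ hfin)

theorem infinite_compl_of_subset_even {A : Set ℕ} (hA : A ⊆ {k | Even k}) : Aᶜ.Infinite :=
  Set.infinite_of_injective_forall_mem (f := fun m => 2*m+1)
    (fun a b h => by simpa using h)
    (fun m hm => Nat.not_even_two_mul_add_one m (hA hm))

theorem stmt_6 :
    (∀ n : ℕ, (({k : ℕ | Even k ∧ 2*n ≤ k}ᶜ : Set ℕ).Infinite ∧
      Supported {k : ℕ | Even k ∧ 2*n ≤ k} (Quotient.mk eqrel (1 : M)))) ∧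
    ¬ Supported (∅ : Set ℕ) (Quotient.mk eqrel (1 : M)) := by
  refine ⟨fun n => ⟨infinite_compl_of_subset_even fun _ hk => hk.1, ?_⟩, not_supported_empty_mk 1⟩
  apply supported_mk_of_finite
  refine (Set.finite_Iio n).subset fun x hx => ?_
  by_contra hxn
  exact hx ⟨even_two_mul x, Nat.mul_le_mul_left 2 (not_lt.mp hxn)⟩
end

section
/- An element u of the monoid M (acting on itself by left multiplication) is supported on a co-infinite subset of ω if and only if the image of u has infinite complement. Moreover, u is supported on its image, and if A is co-infinite with im(u) ⊄ A then u is not supported on A. Consequently M^μ = {u ∈ M : ω \ im(u) is infinite}. -/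
theorem stmt_9 (u : M) :
    ((∃ A : Set ℕ, (Aᶜ : Set ℕ).Infinite ∧ Supported A u) ↔
      ((Set.range u.1)ᶜ : Set ℕ).Infinite) ∧
    Supported (Set.range u.1) u ∧
    (∀ A : Set ℕ, (Aᶜ : Set ℕ).Infinite → ¬ Set.range u.1 ⊆ A → ¬ Supported A u) := by
  have h2 : Supported (Set.range u.1) u := by
    intro f hf
    have : f • u = f * u := rfl
    rw [this]
    apply Subtype.ext
    funext n
    exact hf (u.1 n) ⟨n, rfl⟩
  have h3 : ∀ A : Set ℕ, (Aᶜ : Set ℕ).Infinite → ¬ Set.range u.1 ⊆ A → ¬ Supported A u := by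
    intro A hA hsub hsupp
    obtain ⟨y, ⟨n, rfl⟩, hyA⟩ := Set.not_subset.mp hsub
    obtain ⟨b, hb⟩ := (hA.diff (Set.finite_singleton (u.1 n))).nonempty
    set f : M := ⟨((Equiv.swap (u.1 n) b : Equiv.Perm ℕ) : ℕ → ℕ), (Equiv.swap (u.1 n) b).injective⟩ with hf
    have hfix : ∀ a ∈ A, f.1 a = a := by
      intro a ha
      exact Equiv.swap_apply_of_ne_of_ne
        (fun h : a = u.1 n => hyA (h ▸ ha)) (fun h : a = b => hb.1 (h ▸ ha))
    have heq : f • u = u := hsupp f hfix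
    have : f.1 (u.1 n) = u.1 n := congrFun (congrArg Subtype.val heq) n
    simp only [hf, Equiv.swap_apply_left] at this
    exact (hb.2 (by simpa using this)).elim
  refine ⟨⟨?_, fun h => ⟨Set.range u.1, h, h2⟩⟩, h2, h3⟩
  rintro ⟨A, hA, hs⟩
  have hsub : Set.range u.1 ⊆ A := by
    by_contra hns
    exact h3 A hA hns hs
  exact hA.mono (Set.compl_subset_compl.mpr hsub)
end

section
/- No element of M acting on itself by left multiplication is supported on a finite set; i.e., the maximal tame M-subset M^τ of M is empty. -/
theorem Function.Injective.exists_apply_notMem_of_finite {α β : Type*} [Infinite α]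
    {f : α → β} (hf : f.Injective) {A : Set β} (hA : A.Finite) : ∃ n, f n ∉ A := by
  obtain ⟨_, ⟨n, rfl⟩, hn⟩ := (Set.infinite_range_of_injective hf).exists_notMem_finite hA
  exact ⟨n, hn⟩

theorem Set.Finite.exists_perm_fixing_moving {α : Type*} [Infinite α] [DecidableEq α]
    {A : Set α} (hA : A.Finite) {x : α} (hx : x ∉ A) :
    ∃ σ : Equiv.Perm α, (∀ a ∈ A, σ a = a) ∧ σ x ≠ x := by
  obtain ⟨y, hy⟩ := (hA.insert x).exists_notMem
  obtain ⟨hyx, hyA⟩ : y ≠ x ∧ y ∉ A := by simpa only [Set.mem_insert_iff, not_or] using hy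
  refine ⟨Equiv.swap x y, fun a ha => ?_, by rwa [Equiv.swap_apply_left]⟩
  exact Equiv.swap_apply_of_ne_of_ne (ne_of_mem_of_not_mem ha hx) (ne_of_mem_of_not_mem ha hyA)

theorem stmt_10 (u : M) : ¬ ∃ A : Set ℕ, A.Finite ∧ Supported A u := by
  rintro ⟨A, hA, hsupp⟩
  obtain ⟨n, hn⟩ := Function.Injective.exists_apply_notMem_of_finite u.2 hA
  obtain ⟨σ, hσA, hσn⟩ := hA.exists_perm_fixing_moving hn
  have hσu : σ ∘ u.1 = u.1 := congrArg Subtype.val (hsupp ⟨⇑σ, σ.injective⟩ hσA)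
  exact hσn (congrFun hσu n)
end

section
/- Let X be a mild M-set and f ∈ M. Then the action of f on X is an injective map X → X. -/
lemma M.exists_leftInvOn (f : M) {C : Set ℕ} (hC : Cᶜ.Infinite) :
    ∃ v : M, ∀ c ∈ C, v.1 (f.1 c) = c := by
  classical
  have hf : Function.Injective f.1 := f.2
  let e := hC.natEmbedding
  let v := (f.1 '' C).piecewise (Function.invFun f.1) (fun n => (e n : ℕ))
  have hv : ∀ c ∈ C, v (f.1 c) = c := fun c hc =>
    (Set.piecewise_eq_of_mem _ _ _ (Set.mem_image_of_mem _ hc)).trans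
      (Function.leftInverse_invFun hf c)
  suffices hinj : Function.Injective v from ⟨⟨v, hinj⟩, hv⟩
  rw [Set.injective_piecewise_iff]
  refine ⟨?_, fun a _ b _ hab => e.injective (Subtype.ext hab), ?_⟩
  · rintro _ ⟨a, -, rfl⟩ _ ⟨b, -, rfl⟩ hab
    rw [Function.leftInverse_invFun hf a, Function.leftInverse_invFun hf b] at hab
    rw [hab]
  · rintro _ ⟨c, hc, rfl⟩ n -
    rw [Function.leftInverse_invFun hf c]
    exact fun hce => (e n).2 (hce ▸ hc)

lemma M.apply_notMem_image_union_compl_range (g : M) {P : Set ℕ} {n : ℕ} (hn : n ∉ P) :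
    g.1 n ∉ g.1 '' P ∪ (Set.range g.1)ᶜ := by
  rintro (hP | hrange)
  · exact hn ((Function.Injective.mem_set_image g.2).1 hP)
  · exact hrange ⟨n, rfl⟩

section Supported

variable {X : Type*} [MulAction M X]

lemma Supported.smul_smul_eq {P : Set ℕ} {x : X} (hx : Supported P x) {v f : M}
    (hvf : ∀ a ∈ P, v.1 (f.1 a) = a) : v • f • x = x := by
  rw [smul_smul]
  exact hx (v * f) hvf

/-- An injection `u` fixing `(range g)ᶜ` maps `range g` into itself, so `u ∘ g = g ∘ t` for an
injection `t`, which fixes `P` when `u` fixes `g '' P`. -/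
lemma Supported.smul {P : Set ℕ} {x : X} (hx : Supported P x) (g : M) :
    Supported (g.1 '' P ∪ (Set.range g.1)ᶜ) (g • x) := by
  intro u hu
  have hg : Function.Injective g.1 := g.2
  have hrange : ∀ n, u.1 (g.1 n) ∈ Set.range g.1 := by
    intro n
    by_contra hout
    have hfix : u.1 (u.1 (g.1 n)) = u.1 (g.1 n) := hu _ (Or.inr hout)
    exact hout ⟨n, (u.2 hfix).symm⟩
  let t : ℕ → ℕ := Function.invFun g.1 ∘ u.1 ∘ g.1
  have hgt : g.1 ∘ t = u.1 ∘ g.1 := funext fun n => Function.invFun_eq (hrange n)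
  have ht : Function.Injective t :=
    Function.Injective.of_comp (f := g.1) (hgt ▸ u.2.comp hg)
  have htP : ∀ a ∈ P, t a = a := fun a ha =>
    hg ((congrFun hgt a).trans (hu _ (Or.inl ⟨a, ha, rfl⟩)))
  have hcomm : u * g = g * ⟨t, ht⟩ := Subtype.ext hgt.symm
  rw [smul_smul, hcomm, mul_smul, hx ⟨t, ht⟩ htP]

lemma eq_of_smul_eq_of_supported (f : M) {P Q : Set ℕ} {x y : X} (hx : Supported P x)
    (hy : Supported Q y) (hPQ : (P ∪ Q)ᶜ.Infinite) (h : f • x = f • y) : x = y := by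
  obtain ⟨v, hv⟩ := M.exists_leftInvOn f hPQ
  calc x = v • f • x := (hx.smul_smul_eq fun a ha => hv a (Or.inl ha)).symm
    _ = v • f • y := by rw [h]
    _ = y := hy.smul_smul_eq fun a ha => hv a (Or.inr ha)

lemma exists_supported_disjoint_of_smul_eq (f : M) {A B : Set ℕ} {x y : X}
    (hx : Supported A x) (hy : Supported B y) (hB : Bᶜ.Infinite) (h : f • x = f • y) :
    ∃ T : Set ℕ, Supported T y ∧ Aᶜ ∩ B ⊆ Tᶜ := by
  obtain ⟨w, hw⟩ := M.exists_leftInvOn f hB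
  refine ⟨w.1 '' (f.1 '' A ∪ (Set.range f.1)ᶜ) ∪ (Set.range w.1)ᶜ, ?_, ?_⟩
  · rw [← hy.smul_smul_eq hw, ← h]
    exact (hx.smul f).smul w
  · rintro k ⟨hkA, hkB⟩
    exact hw k hkB ▸ M.apply_notMem_image_union_compl_range w
      (M.apply_notMem_image_union_compl_range f hkA)

end Supported

theorem stmt_11 {X : Type*} [MulAction M X]
    (hmild : ∀ x : X, ∃ A : Set ℕ, (Aᶜ : Set ℕ).Infinite ∧ Supported A x)
    (f : M) : Function.Injective (fun x : X => f • x) := by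
  intro x y h
  obtain ⟨A, hA, hAx⟩ := hmild x
  obtain ⟨B, hB, hBy⟩ := hmild y
  by_cases hAB : (A ∪ B)ᶜ.Infinite
  · exact eq_of_smul_eq_of_supported f hAx hBy hAB h
  obtain ⟨T, hTy, hT⟩ := exists_supported_disjoint_of_smul_eq f hAx hBy hB h
  have hAcB : (Aᶜ ∩ B).Infinite := by
    refine (hA.sdiff (Set.not_infinite.1 hAB)).mono fun k hk => ⟨hk.1, ?_⟩
    by_contra hkB
    exact hk.2 fun hkAB => hkAB.elim hk.1 hkB
  refine eq_of_smul_eq_of_supported f hAx hTy ?_ h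
  rw [Set.compl_union]
  exact hAcB.mono fun k hk => ⟨hk.1, hT hk⟩
end

section
/- Let X be a mild M-set and Y ⊆ X an M-subset (closed under the M-action). Then the complement X \ Y is also closed under the M-action. -/
open Function Set

theorem Set.InjOn.exists_injective_leftInvOn {α β : Type*} [Countable β] {f : α → β}
    {A : Set α} (hf : InjOn f A) (hA : Aᶜ.Infinite) :
    ∃ g : β → α, Injective g ∧ LeftInvOn g f A := by
  classical
  have : Nonempty α := ⟨hA.nonempty.some⟩
  obtain ⟨c, hc⟩ := exists_injective_nat β
  let e := hA.natEmbedding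
  refine ⟨(f '' A).piecewise (invFunOn f A) (fun b => (e (c b)).1), ?_, fun a ha => ?_⟩
  · refine (injective_piecewise_iff _).2
      ⟨invFunOn_injOn_image f A, fun b _ b' _ h => hc (e.injective (Subtype.ext h)), ?_⟩
    rintro _ ⟨a, ha, rfl⟩ b _ h
    exact (e (c b)).2 (h ▸ invFunOn_apply_mem ha)
  · rw [piecewise_eq_of_mem _ _ _ (mem_image_of_mem f ha)]
    exact hf.leftInvOn_invFunOn ha

theorem Supported.exists_smul_smul_eq {X : Type*} [MulAction M X] {A : Set ℕ} {x : X}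
    (hx : Supported A x) (hA : Aᶜ.Infinite) (f : M) : ∃ g : M, g • f • x = x := by
  obtain ⟨g, hg, hgf⟩ := (f.2 : Injective f.1).injOn.exists_injective_leftInvOn hA
  exact ⟨⟨g, hg⟩, by rw [← mul_smul]; exact hx _ hgf⟩

theorem stmt_12 {X : Type*} [MulAction M X]
    (hmild : ∀ x : X, ∃ A : Set ℕ, (Aᶜ : Set ℕ).Infinite ∧ Supported A x)
    (Y : Set X) (hY : ∀ (f : M), ∀ y ∈ Y, f • y ∈ Y) :
    ∀ (f : M), ∀ x ∈ Yᶜ, f • x ∈ Yᶜ := by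
  intro f x hx hfx
  obtain ⟨A, hA, hxA⟩ := hmild x
  obtain ⟨g, hgfx⟩ := hxA.exists_smul_smul_eq hA f
  exact hx (hgfx ▸ hY g _ hfx)
end

section
/- Let A ⊆ ω be co-infinite and let u_0, ..., u_n ∈ M be such that the union ⋃_{k=0}^n u_k(A) is co-infinite. Then there exists χ ∈ M fixing A pointwise such that ⋃_{k=0}^n im(u_k ∘ χ) is also co-infinite. -/
lemma step_exists (A : Set ℕ) (hA : (Aᶜ : Set ℕ).Infinite) {n : ℕ}
    (v : Fin (n+1) → ℕ → ℕ) (hv : ∀ k, Function.Injective (v k))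
    (C : Set ℕ) (hC : C.Infinite) (F G : Finset ℕ) :
    ∃ p : ℕ × ℕ, p.1 ∈ Aᶜ ∧ p.1 ∉ F ∧ p.2 ∈ C ∧ p.2 ∉ G ∧
      (∀ k, ∀ x ∈ F, v k x ≠ p.2) ∧ (∀ k, v k p.1 ∉ G) ∧ (∀ k, v k p.1 ≠ p.2) := by
  have hfin1 : ((↑G : Set ℕ) ∪ ⋃ k, v k '' ↑F).Finite :=
    (G.finite_toSet).union (Set.finite_iUnion fun k => (F.finite_toSet).image _)
  obtain ⟨c, hcC, hc⟩ := (hC.diff hfin1).nonempty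
  have hfin2 : ((↑F : Set ℕ) ∪ ⋃ k, v k ⁻¹' ((↑G : Set ℕ) ∪ {c})).Finite :=
    (F.finite_toSet).union (Set.finite_iUnion fun k =>
      (((G.finite_toSet).union (Set.finite_singleton c)).preimage ((hv k).injOn)))
  obtain ⟨s, hsA, hs⟩ := (hA.diff hfin2).nonempty
  simp only [Set.mem_union, not_or, Set.mem_iUnion, not_exists] at hc hs
  refine ⟨(s, c), hsA, hs.1, hcC, hc.1, ?_, ?_, ?_⟩
  · intro k x hx hxc
    exact hc.2 k ⟨x, hx, hxc⟩
  · intro k hk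
    exact hs.2 k (Or.inl hk)
  · intro k hk
    exact hs.2 k (Or.inr hk)

noncomputable def seqSC (A : Set ℕ) (hA : (Aᶜ : Set ℕ).Infinite) {n : ℕ}
    (v : Fin (n+1) → ℕ → ℕ) (hv : ∀ k, Function.Injective (v k))
    (C : Set ℕ) (hC : C.Infinite) : ℕ → ℕ × ℕ := fun i =>
  Classical.choose (step_exists A hA v hv C hC
    ((Finset.univ : Finset (Fin i)).image fun j => (seqSC A hA v hv C hC j.1).1)
    ((Finset.univ : Finset (Fin i)).image fun j => (seqSC A hA v hv C hC j.1).2))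
termination_by i => i
decreasing_by all_goals exact j.2

lemma seqSC_spec (A : Set ℕ) (hA : (Aᶜ : Set ℕ).Infinite) {n : ℕ}
    (v : Fin (n+1) → ℕ → ℕ) (hv : ∀ k, Function.Injective (v k))
    (C : Set ℕ) (hC : C.Infinite) (i : ℕ) :
    let p := seqSC A hA v hv C hC i
    let F := (Finset.univ : Finset (Fin i)).image fun j => (seqSC A hA v hv C hC j.1).1
    let G := (Finset.univ : Finset (Fin i)).image fun j => (seqSC A hA v hv C hC j.1).2
    p.1 ∈ Aᶜ ∧ p.1 ∉ F ∧ p.2 ∈ C ∧ p.2 ∉ G ∧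
      (∀ k, ∀ x ∈ F, v k x ≠ p.2) ∧ (∀ k, v k p.1 ∉ G) ∧ (∀ k, v k p.1 ≠ p.2) := by
  rw [seqSC]
  exact Classical.choose_spec (step_exists A hA v hv C hC _ _)

section Main

variable (A : Set ℕ) (hA : (Aᶜ : Set ℕ).Infinite) {n : ℕ}
    (v : Fin (n+1) → ℕ → ℕ) (hv : ∀ k, Function.Injective (v k))
    (C : Set ℕ) (hC : C.Infinite)

noncomputable def sFun : ℕ → ℕ := fun i => (seqSC A hA v hv C hC i).1
noncomputable def cFun : ℕ → ℕ := fun i => (seqSC A hA v hv C hC i).2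

lemma sFun_mem (i : ℕ) : sFun A hA v hv C hC i ∈ Aᶜ :=
  (seqSC_spec A hA v hv C hC i).1

lemma cFun_mem (i : ℕ) : cFun A hA v hv C hC i ∈ C :=
  (seqSC_spec A hA v hv C hC i).2.2.1

lemma sFun_ne {j i : ℕ} (hji : j < i) : sFun A hA v hv C hC i ≠ sFun A hA v hv C hC j := by
  intro hEq
  have h2 := (seqSC_spec A hA v hv C hC i).2.1
  exact h2 (Finset.mem_image.2 ⟨⟨j, hji⟩, Finset.mem_univ _, hEq.symm⟩)

lemma cFun_ne {j i : ℕ} (hji : j < i) : cFun A hA v hv C hC i ≠ cFun A hA v hv C hC j := by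
  intro hEq
  have h2 := (seqSC_spec A hA v hv C hC i).2.2.2.1
  exact h2 (Finset.mem_image.2 ⟨⟨j, hji⟩, Finset.mem_univ _, hEq.symm⟩)

lemma sFun_inj : Function.Injective (sFun A hA v hv C hC) := by
  intro i j hEq
  rcases lt_trichotomy i j with hij | hij | hij
  · exact absurd hEq.symm (sFun_ne A hA v hv C hC hij)
  · exact hij
  · exact absurd hEq (sFun_ne A hA v hv C hC hij)

lemma cFun_inj : Function.Injective (cFun A hA v hv C hC) := by
  intro i j hEq
  rcases lt_trichotomy i j with hij | hij | hij
  · exact absurd hEq.symm (cFun_ne A hA v hv C hC hij)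
  · exact hij
  · exact absurd hEq (cFun_ne A hA v hv C hC hij)

lemma key_ne (i : ℕ) (k : Fin (n+1)) (j : ℕ) :
    v k (sFun A hA v hv C hC j) ≠ cFun A hA v hv C hC i := by
  rcases lt_trichotomy j i with hji | hji | hji
  · exact (seqSC_spec A hA v hv C hC i).2.2.2.2.1 k _
      (Finset.mem_image.2 ⟨⟨j, hji⟩, Finset.mem_univ _, rfl⟩)
  · subst hji
    exact (seqSC_spec A hA v hv C hC j).2.2.2.2.2.2 k
  · intro hEq
    exact (seqSC_spec A hA v hv C hC j).2.2.2.2.2.1 k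
      (hEq ▸ Finset.mem_image.2 ⟨⟨i, hji⟩, Finset.mem_univ _, rfl⟩)

end Main

theorem stmt_14 (A : Set ℕ) (hA : (Aᶜ : Set ℕ).Infinite) (n : ℕ) (u : Fin (n+1) → M)
    (h : ((⋃ k, (u k).1 '' A)ᶜ : Set ℕ).Infinite) :
    ∃ χ : M, (∀ a ∈ A, χ.1 a = a) ∧
      ((⋃ k, Set.range ((u k * χ).1))ᶜ : Set ℕ).Infinite := by
  classical
  set v : Fin (n+1) → ℕ → ℕ := fun k => (u k).1 with hvdef
  have hv : ∀ k, Function.Injective (v k) := fun k => (u k).2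
  set C : Set ℕ := (⋃ k, (u k).1 '' A)ᶜ with hCdef
  set s := sFun A hA v hv C h with hsdef
  set c := cFun A hA v hv C h with hcdef
  set χf : ℕ → ℕ := fun x => if x ∈ A then x else s x with hχdef
  have hχinj : Function.Injective χf := by
    intro x y hEq
    by_cases hx : x ∈ A <;> by_cases hy : y ∈ A <;>
      simp only [hχdef, hx, hy, if_pos, if_neg, if_true, if_false] at hEq
    · exact hEq
    · rw [hEq] at hx; exact absurd hx (sFun_mem A hA v hv C h y)
    · rw [← hEq] at hy; exact absurd hy (sFun_mem A hA v hv C h x)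
    · exact sFun_inj A hA v hv C h hEq
  refine ⟨⟨χf, hχinj⟩, fun a ha => if_pos ha, ?_⟩
  have hsub : Set.range c ⊆ (⋃ k, Set.range ((u k * ⟨χf, hχinj⟩).1))ᶜ := by
    rintro _ ⟨i, rfl⟩
    simp only [Set.mem_compl_iff, Set.mem_iUnion, Set.mem_range, not_exists]
    rintro k ⟨x, hEq⟩
    have hmul : (u k * (⟨χf, hχinj⟩ : M)).1 x = v k (χf x) := rfl
    rw [hmul] at hEq
    by_cases hx : x ∈ A
    · have hχx : χf x = x := if_pos hx
      rw [hχx] at hEq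
      have hmem : v k x ∈ ⋃ k, (u k).1 '' A := Set.mem_iUnion.2 ⟨k, ⟨x, hx, rfl⟩⟩
      rw [hEq] at hmem
      exact (cFun_mem A hA v hv C h i) hmem
    · have hχx : χf x = s x := if_neg hx
      rw [hχx] at hEq
      exact key_ne A hA v hv C h i k x hEq
  exact (Set.infinite_range_of_injective (cFun_inj A hA v hv C h)).mono hsub
end

section
/- Let A ⊆ ω be co-infinite, and let (u_0, ..., u_n), (v_0, ..., v_n) ∈ M^{1+n} be tuples of injective self-maps of ω such that u_k restricted to A equals v_k restricted to A for all k, and such that ⋃_{k=0}^n u_k(A) is co-infinite. Then the two tuples represent the same class in the quotient M^{1+n}/M_A of M^{1+n} by the equivalence relation generated by (w_0 f, ..., w_n f) ∼ (w_0, ..., w_n) for f ∈ M_A. -/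
namespace Stmt15Aux

private lemma exists_fresh (P : Set ℕ) (hP : P.Infinite) (B : Set ℕ) (hB : B.Finite) :
    ∃ x, x ∈ P ∧ x ∉ B := by
  obtain ⟨x, hx⟩ := (hP.diff hB).nonempty
  exact ⟨x, hx.1, hx.2⟩

private lemma existsT {ι : Type} [Finite ι] (g : ι → ℕ → ℕ)
    (hg : ∀ i, Function.Injective (g i)) (P : Set ℕ) (hP : P.Infinite) (S T : Finset ℕ) :
    ∃ t, t ∈ P ∧ t ∉ S ∧ ∀ i, g i t ∉ T := by
  have hB : ((↑S : Set ℕ) ∪ ⋃ i, g i ⁻¹' (↑T : Set ℕ)).Finite :=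
    (S.finite_toSet).union (Set.finite_iUnion fun i => (T.finite_toSet).preimage (hg i).injOn)
  obtain ⟨x, hxP, hxB⟩ := exists_fresh P hP _ hB
  refine ⟨x, hxP, fun hx => hxB (Or.inl hx), fun i hx => hxB (Or.inr (Set.mem_iUnion.2 ⟨i, hx⟩))⟩

private lemma existsS {ι : Type} [Finite ι] (g : ι → ℕ → ℕ) (Q : Set ℕ) (hQ : Q.Infinite)
    (S T : Finset ℕ) (t : ℕ) :
    ∃ s, s ∈ Q ∧ s ∉ T ∧ ∀ i x, (x ∈ S ∨ x = t) → s ≠ g i x := by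
  have hB : ((↑T : Set ℕ) ∪ ⋃ i, g i '' ((↑S : Set ℕ) ∪ {t})).Finite :=
    (T.finite_toSet).union
      (Set.finite_iUnion fun i => ((S.finite_toSet).union (Set.finite_singleton t)).image _)
  obtain ⟨x, hxQ, hxB⟩ := exists_fresh Q hQ _ hB
  refine ⟨x, hxQ, fun hx => hxB (Or.inl hx), ?_⟩
  rintro i y hy rfl
  refine hxB (Or.inr (Set.mem_iUnion.2 ⟨i, ⟨y, ?_, rfl⟩⟩))
  rcases hy with hy | rfl
  · exact Or.inl hy
  · exact Or.inr rfl

variable {ι : Type} [Finite ι]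

noncomputable def nT (g : ι → ℕ → ℕ) (hg : ∀ i, Function.Injective (g i))
    (P : Set ℕ) (hP : P.Infinite) (S T : Finset ℕ) : ℕ :=
  (existsT g hg P hP S T).choose

private lemma nT_spec (g : ι → ℕ → ℕ) (hg : ∀ i, Function.Injective (g i))
    (P : Set ℕ) (hP : P.Infinite) (S T : Finset ℕ) :
    nT g hg P hP S T ∈ P ∧ nT g hg P hP S T ∉ S ∧ ∀ i, g i (nT g hg P hP S T) ∉ T :=
  (existsT g hg P hP S T).choose_spec

noncomputable def nS (g : ι → ℕ → ℕ) (hg : ∀ i, Function.Injective (g i))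
    (P Q : Set ℕ) (hP : P.Infinite) (hQ : Q.Infinite) (S T : Finset ℕ) : ℕ :=
  (existsS g Q hQ S T (nT g hg P hP S T)).choose

private lemma nS_spec (g : ι → ℕ → ℕ) (hg : ∀ i, Function.Injective (g i))
    (P Q : Set ℕ) (hP : P.Infinite) (hQ : Q.Infinite) (S T : Finset ℕ) :
    nS g hg P Q hP hQ S T ∈ Q ∧ nS g hg P Q hP hQ S T ∉ T ∧
      ∀ i x, (x ∈ S ∨ x = nT g hg P hP S T) → nS g hg P Q hP hQ S T ≠ g i x :=
  (existsS g Q hQ S T (nT g hg P hP S T)).choose_spec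

noncomputable def St (g : ι → ℕ → ℕ) (hg : ∀ i, Function.Injective (g i))
    (P Q : Set ℕ) (hP : P.Infinite) (hQ : Q.Infinite) : ℕ → Finset ℕ × Finset ℕ
  | 0 => (∅, ∅)
  | m+1 =>
    let p := St g hg P Q hP hQ m
    (insert (nT g hg P hP p.1 p.2) p.1, insert (nS g hg P Q hP hQ p.1 p.2) p.2)

noncomputable def τI (g : ι → ℕ → ℕ) (hg : ∀ i, Function.Injective (g i))
    (P Q : Set ℕ) (hP : P.Infinite) (hQ : Q.Infinite) (m : ℕ) : ℕ :=
  nT g hg P hP (St g hg P Q hP hQ m).1 (St g hg P Q hP hQ m).2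

noncomputable def σI (g : ι → ℕ → ℕ) (hg : ∀ i, Function.Injective (g i))
    (P Q : Set ℕ) (hP : P.Infinite) (hQ : Q.Infinite) (m : ℕ) : ℕ :=
  nS g hg P Q hP hQ (St g hg P Q hP hQ m).1 (St g hg P Q hP hQ m).2

private lemma St_fst (g : ι → ℕ → ℕ) (hg : ∀ i, Function.Injective (g i))
    (P Q : Set ℕ) (hP : P.Infinite) (hQ : Q.Infinite) (m : ℕ) :
    (St g hg P Q hP hQ m).1 = (Finset.range m).image (τI g hg P Q hP hQ) := by
  induction m with
  | zero => simp [St]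
  | succ k ih =>
    rw [Finset.range_add_one, Finset.image_insert, ← ih]; rfl

private lemma St_snd (g : ι → ℕ → ℕ) (hg : ∀ i, Function.Injective (g i))
    (P Q : Set ℕ) (hP : P.Infinite) (hQ : Q.Infinite) (m : ℕ) :
    (St g hg P Q hP hQ m).2 = (Finset.range m).image (σI g hg P Q hP hQ) := by
  induction m with
  | zero => simp [St]
  | succ k ih =>
    rw [Finset.range_add_one, Finset.image_insert, ← ih]; rfl

theorem key (g : ι → ℕ → ℕ) (hg : ∀ i, Function.Injective (g i))
    (P Q : Set ℕ) (hP : P.Infinite) (hQ : Q.Infinite) :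
    ∃ τ σ : ℕ → ℕ, Function.Injective τ ∧ Function.Injective σ ∧
      (∀ m, τ m ∈ P) ∧ (∀ m, σ m ∈ Q) ∧ ∀ i a b, σ a ≠ g i (τ b) := by
  set τ := τI g hg P Q hP hQ with hτ
  set σ := σI g hg P Q hP hQ with hσ
  have memT : ∀ {a b : ℕ}, a < b → τ a ∈ (St g hg P Q hP hQ b).1 := by
    intro a b hab
    rw [St_fst]
    exact Finset.mem_image.2 ⟨a, Finset.mem_range.2 hab, rfl⟩
  have memS : ∀ {a b : ℕ}, a < b → σ a ∈ (St g hg P Q hP hQ b).2 := by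
    intro a b hab
    rw [St_snd]
    exact Finset.mem_image.2 ⟨a, Finset.mem_range.2 hab, rfl⟩
  have hinjτ : Function.Injective τ := by
    intro a b hab
    rcases lt_trichotomy a b with h | h | h
    · exact absurd (hab ▸ memT h) (nT_spec g hg P hP _ _).2.1
    · exact h
    · exact absurd (hab.symm ▸ memT h) (nT_spec g hg P hP _ _).2.1
  have hinjσ : Function.Injective σ := by
    intro a b hab
    rcases lt_trichotomy a b with h | h | h
    · exact absurd (hab ▸ memS h) (nS_spec g hg P Q hP hQ _ _).2.1
    · exact h
    · exact absurd (hab.symm ▸ memS h) (nS_spec g hg P Q hP hQ _ _).2.1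
  refine ⟨τ, σ, hinjτ, hinjσ, fun m => (nT_spec g hg P hP _ _).1,
    fun m => (nS_spec g hg P Q hP hQ _ _).1, ?_⟩
  intro i a b
  rcases le_or_gt b a with h | h
  · refine (nS_spec g hg P Q hP hQ (St g hg P Q hP hQ a).1 (St g hg P Q hP hQ a).2).2.2 i (τ b) ?_
    rcases lt_or_eq_of_le h with h' | rfl
    · exact Or.inl (memT h')
    · exact Or.inr rfl
  · intro heq
    exact (nT_spec g hg P hP (St g hg P Q hP hQ b).1 (St g hg P Q hP hQ b).2).2.2 i
      (heq ▸ memS h)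

end Stmt15Aux

open Stmt15Aux

theorem stmt_15 (A : Set ℕ) (hA : (Aᶜ : Set ℕ).Infinite) (n : ℕ)
    (u v : Fin (n+1) → M)
    (hagree : ∀ k, ∀ a ∈ A, (u k).1 a = (v k).1 a)
    (hunion : ((⋃ k, (u k).1 '' A)ᶜ : Set ℕ).Infinite) :
    Relation.EqvGen
      (fun w w' : Fin (n+1) → M =>
        ∃ f : M, (∀ a ∈ A, f.1 a = a) ∧ w' = fun k => w k * f) u v := by
  classical
  set R := fun w w' : Fin (n+1) → M =>
    ∃ f : M, (∀ a ∈ A, f.1 a = a) ∧ w' = fun k => w k * f with hR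
  -- enumeration of Aᶜ
  obtain ⟨E⟩ : Nonempty (ℕ ≃ ↥(Aᶜ)) := by
    haveI := hA.to_subtype
    haveI : Denumerable ↥(Aᶜ) := (nonempty_denumerable ↥(Aᶜ)).some
    exact ⟨(Denumerable.eqv ↥(Aᶜ)).symm⟩
  set c : ℕ → ℕ := fun m => (E m).1 with hc
  have hcA : ∀ m, c m ∉ A := fun m => (E m).2
  have hcinj : Function.Injective c := fun a b hab => E.injective (Subtype.ext hab)
  set c' : ℕ → ℕ := fun x => if hx : x ∈ Aᶜ then E.symm ⟨x, hx⟩ else 0 with hc'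
  have hc'c : ∀ m, c' (c m) = m := by
    intro m
    have : c m ∈ Aᶜ := (E m).2
    simp only [hc', dif_pos this, hc]
    rw [dif_pos (E m).2]; exact E.symm_apply_apply m
  have hcc' : ∀ x, x ∉ A → c (c' x) = x := by
    intro x hx
    have hx' : x ∈ Aᶜ := hx
    simp only [hc', dif_pos hx', hc, E.apply_symm_apply]
  -- the key combinatorial construction
  set g : Bool × Fin (n+1) → ℕ → ℕ := fun p => if p.1 then (u p.2).1 else (v p.2).1 with hgdef
  have hg : ∀ p, Function.Injective (g p) := by
    rintro ⟨b, k⟩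
    cases b
    · exact (v k).2
    · exact (u k).2
  obtain ⟨τI, σI, hτinj, hσinj, hτP, hσQ, hcross⟩ :=
    key g hg (Aᶜ) ((⋃ k, (u k).1 '' A)ᶜ) hA hunion
  have hτA : ∀ m, τI m ∉ A := fun m => hτP m
  have hσuA : ∀ m k x, x ∈ A → σI m ≠ (u k).1 x := by
    intro m k x hx heq
    exact (hσQ m) (Set.mem_iUnion.2 ⟨k, ⟨x, hx, heq.symm⟩⟩)
  have hσvA : ∀ m k x, x ∈ A → σI m ≠ (v k).1 x := by
    intro m k x hx heq
    exact hσuA m k x hx (by rw [hagree k x hx]; exact heq)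
  have hcrossu : ∀ (k : Fin (n+1)) a b, σI a ≠ (u k).1 (τI b) := fun k => hcross (true, k)
  have hcrossv : ∀ (k : Fin (n+1)) a b, σI a ≠ (v k).1 (τI b) := fun k => hcross (false, k)
  -- the maps
  set τ : ℕ → ℕ := fun x => if x ∈ A then x else τI (c' x) with hτdef
  set f₂ : ℕ → ℕ := fun x => if x ∈ A then x else c (2 * c' x + 1) with hf₂def
  set h : ℕ → ℕ := fun x => if x ∈ A then x else c (2 * c' x) with hhdef
  set wt : Fin (n+1) → ℕ → ℕ :=
    fun k x => if x ∈ A then (u k).1 x else σI (c' x) with hwtdef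
  set zt : Fin (n+1) → ℕ → ℕ :=
    fun k x => if x ∈ A then (u k).1 x
      else if c' x % 2 = 1 then (u k).1 (τI (c' x / 2)) else σI (c' x) with hztdef
  set zt' : Fin (n+1) → ℕ → ℕ :=
    fun k x => if x ∈ A then (u k).1 x
      else if c' x % 2 = 1 then (v k).1 (τI (c' x / 2)) else σI (c' x) with hzt'def
  -- injectivity of c' on Aᶜ (via hcc')
  have hc'inj : ∀ x y, x ∉ A → y ∉ A → c' x = c' y → x = y := by
    intro x y hx hy hxy
    rw [← hcc' x hx, ← hcc' y hy, hxy]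
  -- injectivity of τ
  have hτM : Function.Injective τ := by
    intro x y hxy
    simp only [hτdef] at hxy
    by_cases hx : x ∈ A <;> by_cases hy : y ∈ A <;> simp [hx, hy] at hxy
    · exact hxy
    · exact absurd (hxy ▸ hx) (hτA (c' y))
    · exact absurd (hxy.symm ▸ hy) (hτA (c' x))
    · exact hc'inj x y hx hy (hτinj hxy)
  -- injectivity of f₂ and h
  have hf₂M : Function.Injective f₂ := by
    intro x y hxy
    simp only [hf₂def] at hxy
    by_cases hx : x ∈ A <;> by_cases hy : y ∈ A <;> simp [hx, hy] at hxy
    · exact hxy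
    · exact absurd (hxy ▸ hx) (hcA _)
    · exact absurd (hxy.symm ▸ hy) (hcA _)
    · have := hcinj hxy
      exact hc'inj x y hx hy (by omega)
  have hhM : Function.Injective h := by
    intro x y hxy
    simp only [hhdef] at hxy
    by_cases hx : x ∈ A <;> by_cases hy : y ∈ A <;> simp [hx, hy] at hxy
    · exact hxy
    · exact absurd (hxy ▸ hx) (hcA _)
    · exact absurd (hxy.symm ▸ hy) (hcA _)
    · have := hcinj hxy
      exact hc'inj x y hx hy (by omega)
  -- injectivity of wt, zt, zt'
  have hwtM : ∀ k, Function.Injective (wt k) := by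
    intro k x y hxy
    simp only [hwtdef] at hxy
    by_cases hx : x ∈ A <;> by_cases hy : y ∈ A <;> simp [hx, hy] at hxy
    · exact (u k).2 hxy
    · exact absurd hxy.symm (hσuA _ k x hx)
    · exact absurd hxy (hσuA _ k y hy)
    · exact hc'inj x y hx hy (hσinj hxy)
  have hztM : ∀ k, Function.Injective (zt k) := by
    intro k x y hxy
    simp only [hztdef] at hxy
    by_cases hx : x ∈ A <;> by_cases hy : y ∈ A <;> simp only [if_pos, if_neg, hx, hy,
      if_true, if_false, ite_true, ite_false] at hxy
    · exact (u k).2 hxy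
    · by_cases hpy : c' y % 2 = 1 <;> simp [hpy] at hxy
      · exact absurd ((u k).2 hxy) (fun heq => (hτA _) (heq ▸ hx))
      · exact absurd hxy.symm (hσuA _ k x hx)
    · by_cases hpx : c' x % 2 = 1 <;> simp [hpx] at hxy
      · exact absurd ((u k).2 hxy).symm (fun heq => (hτA _) (heq ▸ hy))
      · exact absurd hxy (hσuA _ k y hy)
    · by_cases hpx : c' x % 2 = 1 <;> by_cases hpy : c' y % 2 = 1 <;>
        simp [hpx, hpy] at hxy
      · have := hτinj ((u k).2 hxy)
        exact hc'inj x y hx hy (by omega)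
      · exact absurd hxy.symm (hcrossu k _ _)
      · exact absurd hxy (hcrossu k _ _)
      · exact hc'inj x y hx hy (hσinj hxy)
  have hzt'M : ∀ k, Function.Injective (zt' k) := by
    intro k x y hxy
    simp only [hzt'def] at hxy
    by_cases hx : x ∈ A <;> by_cases hy : y ∈ A <;> simp only [if_pos, if_neg, hx, hy,
      if_true, if_false, ite_true, ite_false] at hxy
    · exact (u k).2 hxy
    · by_cases hpy : c' y % 2 = 1 <;> simp [hpy] at hxy
      · rw [hagree k x hx] at hxy
        exact absurd ((v k).2 hxy) (fun heq => (hτA _) (heq ▸ hx))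
      · exact absurd hxy.symm (hσuA _ k x hx)
    · by_cases hpx : c' x % 2 = 1 <;> simp [hpx] at hxy
      · rw [hagree k y hy] at hxy
        exact absurd ((v k).2 hxy).symm (fun heq => (hτA _) (heq ▸ hy))
      · exact absurd hxy (hσuA _ k y hy)
    · by_cases hpx : c' x % 2 = 1 <;> by_cases hpy : c' y % 2 = 1 <;>
        simp [hpx, hpy] at hxy
      · have := hτinj ((v k).2 hxy)
        exact hc'inj x y hx hy (by omega)
      · exact absurd hxy.symm (hcrossv k _ _)
      · exact absurd hxy (hcrossv k _ _)
      · exact hc'inj x y hx hy (hσinj hxy)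
  -- bundle as elements of M
  set T : M := ⟨τ, hτM⟩ with hT
  set F₂ : M := ⟨f₂, hf₂M⟩ with hF₂
  set H : M := ⟨h, hhM⟩ with hH
  set W : Fin (n+1) → M := fun k => ⟨wt k, hwtM k⟩ with hW
  set Z : Fin (n+1) → M := fun k => ⟨zt k, hztM k⟩ with hZ
  set Z' : Fin (n+1) → M := fun k => ⟨zt' k, hzt'M k⟩ with hZ'
  have hTA : ∀ a ∈ A, T.1 a = a := fun a ha => if_pos ha
  have hF₂A : ∀ a ∈ A, F₂.1 a = a := fun a ha => if_pos ha
  have hHA : ∀ a ∈ A, H.1 a = a := fun a ha => if_pos ha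
  -- key pointwise equalities
  have keyf₂ : ∀ x, x ∉ A → (c' (c (2 * c' x + 1)) % 2 = 1) ∧ c' (c (2 * c' x + 1)) / 2 = c' x := by
    intro x hx
    rw [hc'c]
    omega
  have eq1 : (fun k => Z k * F₂) = fun k => u k * T := by
    funext k
    refine Subtype.ext (funext fun x => ?_)
    show zt k (f₂ x) = (u k).1 (τ x)
    by_cases hx : x ∈ A
    · simp only [hf₂def, hτdef, if_pos hx, hztdef]
    · simp only [hf₂def, hτdef, if_neg hx, hztdef]
      have h1 : c (2 * c' x + 1) ∉ A := hcA _
      rw [if_neg h1, if_pos (keyf₂ x hx).1, (keyf₂ x hx).2]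
  have eq1' : (fun k => Z' k * F₂) = fun k => v k * T := by
    funext k
    refine Subtype.ext (funext fun x => ?_)
    show zt' k (f₂ x) = (v k).1 (τ x)
    by_cases hx : x ∈ A
    · simp only [hf₂def, hτdef, if_pos hx, hzt'def]
      simp [hx, hagree k x hx]
    · simp only [hf₂def, hτdef, if_neg hx, hzt'def]
      have h1 : c (2 * c' x + 1) ∉ A := hcA _
      rw [if_neg h1, if_pos (keyf₂ x hx).1, (keyf₂ x hx).2]
  have eq2 : (fun k => Z k * H) = fun k => W k * H := by
    funext k
    refine Subtype.ext (funext fun x => ?_)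
    show zt k (h x) = wt k (h x)
    by_cases hx : x ∈ A
    · simp only [hhdef, if_pos hx, hztdef, hwtdef]
    · simp only [hhdef, if_neg hx, hztdef, hwtdef]
      have h1 : c (2 * c' x) ∉ A := hcA _
      have h2 : c' (c (2 * c' x)) % 2 ≠ 1 := by rw [hc'c]; omega
      rw [if_neg h1, if_neg h1, if_neg h2]
  have eq2' : (fun k => Z' k * H) = fun k => W k * H := by
    funext k
    refine Subtype.ext (funext fun x => ?_)
    show zt' k (h x) = wt k (h x)
    by_cases hx : x ∈ A
    · simp only [hhdef, if_pos hx, hzt'def, hwtdef]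
    · simp only [hhdef, if_neg hx, hzt'def, hwtdef]
      have h1 : c (2 * c' x) ∉ A := hcA _
      have h2 : c' (c (2 * c' x)) % 2 ≠ 1 := by rw [hc'c]; omega
      rw [if_neg h1, if_neg h1, if_neg h2]
  -- assemble the zigzag
  have r1 : Relation.EqvGen R u (fun k => u k * T) :=
    Relation.EqvGen.rel _ _ ⟨T, hTA, rfl⟩
  have r2 : Relation.EqvGen R Z (fun k => u k * T) := by
    rw [← eq1]
    exact Relation.EqvGen.rel _ _ ⟨F₂, hF₂A, rfl⟩
  have r3 : Relation.EqvGen R Z (fun k => W k * H) := by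
    rw [← eq2]
    exact Relation.EqvGen.rel _ _ ⟨H, hHA, rfl⟩
  have r4 : Relation.EqvGen R W (fun k => W k * H) :=
    Relation.EqvGen.rel _ _ ⟨H, hHA, rfl⟩
  have r5 : Relation.EqvGen R Z' (fun k => W k * H) := by
    rw [← eq2']
    exact Relation.EqvGen.rel _ _ ⟨H, hHA, rfl⟩
  have r6 : Relation.EqvGen R Z' (fun k => v k * T) := by
    rw [← eq1']
    exact Relation.EqvGen.rel _ _ ⟨F₂, hF₂A, rfl⟩
  have r7 : Relation.EqvGen R v (fun k => v k * T) :=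
    Relation.EqvGen.rel _ _ ⟨T, hTA, rfl⟩
  exact (((((r1.trans _ _ _ (r2.symm _ _)).trans _ _ _ r3).trans _ _ _ (r4.symm _ _)).trans
    _ _ _ r4).trans _ _ _ ((r5.symm _ _).trans _ _ _ (r6.trans _ _ _ (r7.symm _ _))))
end

section
/- Let n ≥ 1 and let A_1, ..., A_n ⊆ ω each have infinite complement. Consider the equivalence relation on the set Inj(n × ω, ω) of injections from n disjoint copies of ω into ω, generated by φ ∼ φ ∘ (f_1 ⊔ ... ⊔ f_n) for all f_i ∈ M fixing A_i pointwise. Then two injections φ, ψ ∈ Inj(n × ω, ω) are equivalent if and only if they agree on {i} × A_i for all i = 1, ..., n. -/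
/-!
Each generating move preserves the values on the sets `{i} × A i`. Conversely, an injection that
agrees with `φ` there and takes its other values on block `i` among the values of `φ` on block `i`
is one move away from `φ`. As every block has infinitely many points off `A i`, Hall's theorem
supplies pairwise distinct fresh values, one family drawn block by block from the values of `φ` off
the sets `A i` and one from those of `ψ`. Substituting them for `φ` off the sets `A i` gives `φ'`
and `ψ'`, one move from `φ` and `ψ` respectively, and an injection whose values on each block
interleave those of `φ'` and `ψ'` is one move from both.
-/

open Function
open scoped Finset

theorem exists_injective_forall_mem_of_infinite {ι α : Type*} [Countable ι] {T : ι → Set α}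
    (hT : ∀ i, (T i).Infinite) : ∃ c : ι → α, Injective c ∧ ∀ i, c i ∈ T i := by
  classical
  obtain ⟨e, he⟩ := Countable.exists_injective_nat ι
  -- Hall's condition holds for finite subsets `t i ⊆ T i` of size `e i + 1`.
  choose t htT ht using fun i => (hT i).exists_subset_card_eq (e i + 1)
  obtain ⟨c, hc, hct⟩ := (Finset.all_card_le_biUnion_card_iff_exists_injective t).1 fun s => by
    rcases s.eq_empty_or_nonempty with rfl | hs
    · simp
    obtain ⟨i, hi, hmax⟩ := s.exists_max_image e hs
    calc #s = #(s.image e) := (Finset.card_image_of_injective s he).symm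
      _ ≤ #(Finset.range (e i + 1)) := Finset.card_le_card fun k hk => by
        obtain ⟨j, hj, rfl⟩ := Finset.mem_image.1 hk
        exact Finset.mem_range.2 (Nat.lt_succ_of_le (hmax j hj))
      _ = #(t i) := by rw [Finset.card_range, ht]
      _ ≤ #(s.biUnion t) := Finset.card_le_card (Finset.subset_biUnion_of_mem t hi)
  exact ⟨c, hc, fun i => htT i (hct i)⟩

theorem exists_equiv_bool_prod_fiberwise {α ι : Type*} [Countable α] (f : α → ι)
    (hf : ∀ i, (f ⁻¹' {i}).Infinite) : ∃ τ : α ≃ Bool × α, ∀ a, f (τ a).2 = f a := by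
  have e : ∀ i, {a // f a = i} ≃ {p : Bool × α // f p.2 = i} := fun i => by
    have : Infinite {a // f a = i} := (hf i).to_subtype
    have : Infinite {p : Bool × α // f p.2 = i} :=
      Infinite.of_injective (fun a : {a // f a = i} => ⟨(false, a.1), a.2⟩)
        fun a b h => Subtype.ext (congrArg (fun p => p.1.2) h)
    exact nonempty_equiv_of_countable.some
  exact ⟨(Equiv.sigmaFiberEquiv f).symm.trans ((Equiv.sigmaCongrRight e).trans
    (Equiv.sigmaFiberEquiv fun p : Bool × α => f p.2)), fun a => (e (f a) ⟨a, rfl⟩).2⟩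

abbrev Inj (ι : Type*) := {φ : ι × ℕ → ℕ // Injective φ}

namespace Inj

variable {ι : Type*}

def PrecompFixing (A : ι → Set ℕ) (φ ψ : Inj ι) : Prop :=
  ∃ f : ι → M, (∀ i, ∀ a ∈ A i, (f i).1 a = a) ∧ ψ.1 = fun p => φ.1 (p.1, (f p.1).1 p.2)

variable {A : ι → Set ℕ}

theorem apply_eq_of_eqvGen_precompFixing {φ ψ : Inj ι}
    (h : Relation.EqvGen (PrecompFixing A) φ ψ) : ∀ i, ∀ a ∈ A i, φ.1 (i, a) = ψ.1 (i, a) := by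
  intro i a ha
  induction h with
  | rel φ ψ hφψ =>
    obtain ⟨f, hf, hψ⟩ := hφψ
    rw [hψ]
    exact congrArg (fun z => φ.1 (i, z)) (hf i a ha).symm
  | refl => rfl
  | symm _ _ _ ih => exact ih.symm
  | trans _ _ _ _ _ ih₁ ih₂ => exact ih₁.trans ih₂

theorem precompFixing_of_forall_exists {φ χ : Inj ι}
    (hA : ∀ i, ∀ a ∈ A i, χ.1 (i, a) = φ.1 (i, a))
    (hB : ∀ i x, x ∉ A i → ∃ y, χ.1 (i, x) = φ.1 (i, y)) : PrecompFixing A φ χ := by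
  classical
  choose y hy using hB
  let f : ι → ℕ → ℕ := fun i x => if hx : x ∈ A i then x else y i x hx
  have hχ : ∀ p, χ.1 p = φ.1 (p.1, f p.1 p.2) := by
    rintro ⟨i, x⟩
    by_cases hx : x ∈ A i
    · simp only [f, dif_pos hx, hA i x hx]
    · simp only [f, dif_neg hx, hy i x hx]
  have hf : ∀ i, Injective (f i) := fun i x x' h => by
    have : χ.1 (i, x) = χ.1 (i, x') := by
      rw [hχ, hχ]
      exact congrArg (fun z => φ.1 (i, z)) h
    exact congrArg Prod.snd (χ.2 this)
  exact ⟨fun i => ⟨f i, hf i⟩, fun i a ha => dif_pos ha, funext hχ⟩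

abbrev OffSupport (A : ι → Set ℕ) := {p : ι × ℕ // p.2 ∉ A p.1}

theorem offSupport_fiber_infinite (hA : ∀ i, (A i)ᶜ.Infinite) (i : ι) :
    {q : OffSupport A | q.1.1 = i}.Infinite := by
  have := (hA i).to_subtype
  exact Set.infinite_of_injective_forall_mem
    (f := fun x : ((A i)ᶜ : Set ℕ) => (⟨(i, x.1), x.2⟩ : OffSupport A))
    (fun x y h => Subtype.ext (congrArg (fun q : OffSupport A => q.1.2) h)) fun _ => rfl

open Classical in
noncomputable def patch (φ₀ : ι × ℕ → ℕ) (W : OffSupport A → ℕ) (p : ι × ℕ) : ℕ :=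
  if h : p.2 ∈ A p.1 then φ₀ p else W ⟨p, h⟩

theorem patch_of_mem {φ₀ : ι × ℕ → ℕ} {W : OffSupport A → ℕ} {p : ι × ℕ} (h : p.2 ∈ A p.1) :
    patch φ₀ W p = φ₀ p :=
  dif_pos h

theorem patch_of_not_mem {φ₀ : ι × ℕ → ℕ} {W : OffSupport A → ℕ} {p : ι × ℕ}
    (h : p.2 ∉ A p.1) : patch φ₀ W p = W ⟨p, h⟩ :=
  dif_neg h

theorem patch_injective {φ₀ : ι × ℕ → ℕ} {W : OffSupport A → ℕ} (hφ₀ : Injective φ₀)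
    (hW : Injective W) (hdisj : ∀ q p, p.2 ∈ A p.1 → W q ≠ φ₀ p) : Injective (patch φ₀ W) := by
  intro p p' h
  by_cases hp : p.2 ∈ A p.1 <;> by_cases hp' : p'.2 ∈ A p'.1
  · rw [patch_of_mem hp, patch_of_mem hp'] at h
    exact hφ₀ h
  · rw [patch_of_mem hp, patch_of_not_mem hp'] at h
    exact absurd h.symm (hdisj _ p hp)
  · rw [patch_of_mem hp', patch_of_not_mem hp] at h
    exact absurd h (hdisj _ p' hp')
  · rw [patch_of_not_mem hp, patch_of_not_mem hp'] at h
    exact congrArg Subtype.val (hW h)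

theorem precompFixing_patch {φ₀ : ι × ℕ → ℕ} {W : OffSupport A → ℕ} {χ χ' : Inj ι}
    (hχ : ∀ i, ∀ a ∈ A i, χ.1 (i, a) = φ₀ (i, a)) (hχ' : χ'.1 = patch φ₀ W)
    (hW : ∀ q, W q ∈ (fun q' : OffSupport A => χ.1 q'.1) '' {q' | q'.1.1 = q.1.1}) :
    PrecompFixing A χ χ' := by
  refine precompFixing_of_forall_exists (fun i a ha => ?_) fun i x hx => ?_
  · rw [hχ', hχ i a ha]
    exact patch_of_mem ha
  · obtain ⟨⟨⟨j, y⟩, _⟩, rfl, hWy⟩ := hW ⟨(i, x), hx⟩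
    exact ⟨y, by rw [hχ', patch_of_not_mem hx, ← hWy]⟩

theorem eqvGen_patch [Countable ι] (hA : ∀ i, (A i)ᶜ.Infinite) {φ₀ : ι × ℕ → ℕ}
    (hφ₀ : Injective φ₀) {c : Bool × OffSupport A → ℕ} (hc : Injective c)
    (hdisj : ∀ b q p, p.2 ∈ A p.1 → c (b, q) ≠ φ₀ p) {χ₀ χ₁ : Inj ι}
    (h₀ : χ₀.1 = patch φ₀ fun q => c (false, q)) (h₁ : χ₁.1 = patch φ₀ fun q => c (true, q)) :
    Relation.EqvGen (PrecompFixing A) χ₀ χ₁ := by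
  obtain ⟨τ, hτ⟩ := exists_equiv_bool_prod_fiberwise (fun q : OffSupport A => q.1.1)
    (offSupport_fiber_infinite hA)
  let χ : Inj ι := ⟨patch φ₀ (c ∘ τ),
    patch_injective hφ₀ (hc.comp τ.injective) fun q p hp => hdisj _ _ p hp⟩
  have hstep : ∀ b (χ' : Inj ι), (χ'.1 = patch φ₀ fun q => c (b, q)) → PrecompFixing A χ χ' :=
    fun b χ' h => precompFixing_patch (fun i a ha => patch_of_mem ha) h fun q =>
      ⟨τ.symm (b, q), by simpa using (hτ (τ.symm (b, q))).symm, by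
        simp only [χ, patch_of_not_mem (τ.symm (b, q)).2, comp_apply, Subtype.coe_eta,
          Equiv.apply_symm_apply]⟩
  exact (Relation.EqvGen.rel _ _ (hstep false χ₀ h₀)).symm.trans _ _ _
    (Relation.EqvGen.rel _ _ (hstep true χ₁ h₁))

theorem eqvGen_precompFixing_iff [Countable ι] (hA : ∀ i, (A i)ᶜ.Infinite) (φ ψ : Inj ι) :
    Relation.EqvGen (PrecompFixing A) φ ψ ↔ ∀ i, ∀ a ∈ A i, φ.1 (i, a) = ψ.1 (i, a) := by
  refine ⟨apply_eq_of_eqvGen_precompFixing, fun hφψ => ?_⟩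
  let θ (b : Bool) : Inj ι := cond b ψ φ
  have hθ : ∀ b, ∀ i, ∀ a ∈ A i, (θ b).1 (i, a) = φ.1 (i, a) := by
    rintro (_ | _) i a ha
    exacts [rfl, (hφψ i a ha).symm]
  obtain ⟨c, hc, hcθ⟩ := exists_injective_forall_mem_of_infinite
    (T := fun bq : Bool × OffSupport A =>
      (fun q : OffSupport A => (θ bq.1).1 q.1) '' {q | q.1.1 = bq.2.1.1})
    fun bq => (offSupport_fiber_infinite hA _).image ((θ bq.1).2.comp Subtype.val_injective).injOn
  have hdisj : ∀ b q p, p.2 ∈ A p.1 → c (b, q) ≠ φ.1 p := by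
    rintro b q ⟨i, a⟩ ha hcp
    obtain ⟨q', -, hq'⟩ := hcθ (b, q)
    have : q'.1 = (i, a) := (θ b).2 (hq'.trans (hcp.trans (hθ b i a ha).symm))
    exact q'.2 (this ▸ ha)
  let χ (b : Bool) : Inj ι := ⟨patch φ.1 fun q => c (b, q),
    patch_injective φ.2 (hc.comp (Prod.mk_right_injective b)) (hdisj b)⟩
  have hstep : ∀ b, PrecompFixing A (θ b) (χ b) := fun b =>
    precompFixing_patch (hθ b) rfl fun q => hcθ (b, q)
  exact (Relation.EqvGen.rel _ _ (hstep false)).trans _ _ _ <|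
    (eqvGen_patch hA φ.2 hc hdisj rfl rfl).trans _ _ _ (Relation.EqvGen.rel _ _ (hstep true)).symm

end Inj

theorem stmt_16_general (n : ℕ) (A : Fin n → Set ℕ)
    (hA : ∀ i, ((A i)ᶜ : Set ℕ).Infinite)
    (φ ψ : {φ : Fin n × ℕ → ℕ // Function.Injective φ}) :
    Relation.EqvGen
      (fun φ ψ : {φ : Fin n × ℕ → ℕ // Function.Injective φ} =>
        ∃ f : Fin n → M, (∀ i, ∀ a ∈ A i, (f i).1 a = a) ∧
          ψ.1 = fun p => φ.1 (p.1, (f p.1).1 p.2)) φ ψ ↔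
    ∀ i : Fin n, ∀ a ∈ A i, φ.1 (i, a) = ψ.1 (i, a) :=
  Inj.eqvGen_precompFixing_iff hA φ ψ

theorem stmt_16 (n : ℕ) (hn : 1 ≤ n) (A : Fin n → Set ℕ)
    (hA : ∀ i, ((A i)ᶜ : Set ℕ).Infinite)
    (φ ψ : {φ : Fin n × ℕ → ℕ // Function.Injective φ}) :
    Relation.EqvGen
      (fun φ ψ : {φ : Fin n × ℕ → ℕ // Function.Injective φ} =>
        ∃ f : Fin n → M, (∀ i, ∀ a ∈ A i, (f i).1 a = a) ∧
          ψ.1 = fun p => φ.1 (p.1, (f p.1).1 p.2)) φ ψ ↔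
    ∀ i : Fin n, ∀ a ∈ A i, φ.1 (i, a) = ψ.1 (i, a) :=
  stmt_16_general n A hA φ ψ
end

section
/- The quotient of Inj(n × ω, ω) by the equivalence relation generated by precomposition with maps f_1 ⊔ ... ⊔ f_n for arbitrary f_1, ..., f_n ∈ M consists of a single equivalence class; i.e., any two injections n × ω → ω are related. -/
/-!
If every fibre `χ(i, ·)` has range inside that of `φ(i, ·)`, then `χ` is `φ` precomposed with
`f_1 ⊔ ⋯ ⊔ f_n`, where `f_i` is injective because `χ` is. Given `φ` and `ψ`, choose `Φ(i, m)` in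
the `i`-th fibre of `φ` for even `m` and of `ψ` for odd `m`, each level lying above all values of
the previous one. Then `Φ` is injective, and its restrictions to the even and to the odd levels
link it to `φ` and to `ψ` respectively.
-/

open Function Set

namespace InjSumNat

variable {ι : Type*}

abbrev Inj (ι : Type*) := {φ : ι × ℕ → ℕ // Injective φ}

def Rel (φ ψ : Inj ι) : Prop :=
  ∃ f : ι → M, ψ.1 = fun p => φ.1 (p.1, (f p.1).1 p.2)

def fiber (φ : Inj ι) (i : ι) : Set ℕ := range fun k => φ.1 (i, k)

lemma fiber_infinite (φ : Inj ι) (i : ι) : (fiber φ i).Infinite :=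
  infinite_range_of_injective fun _ _ h => congrArg Prod.snd (φ.2 h)

lemma pairwise_disjoint_fiber (φ : Inj ι) : Pairwise (Disjoint on fiber φ) := by
  intro i j hij
  rw [onFun, Set.disjoint_left]
  rintro _ ⟨k, rfl⟩ ⟨l, hl⟩
  exact hij (congrArg Prod.fst (φ.2 hl)).symm

lemma rel_of_fiber_subset {φ χ : Inj ι} (h : ∀ i, fiber χ i ⊆ fiber φ i) : Rel φ χ := by
  choose f hf using fun i k => h i ⟨k, rfl⟩
  refine ⟨fun i => ⟨f i, fun k l hkl => ?_⟩, funext fun p => (hf p.1 p.2).symm⟩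
  have := (hf i k).symm.trans ((congrArg (fun x => φ.1 (i, x)) hkl).trans (hf i l))
  exact congrArg Prod.snd (χ.2 this)

def Inj.precomp (φ : Inj ι) {g : ℕ → ℕ} (hg : Injective g) : Inj ι :=
  ⟨fun p => φ.1 (p.1, g p.2), φ.2.comp (Injective.prodMap injective_id hg)⟩

lemma fiber_precomp_subset (φ : Inj ι) {g : ℕ → ℕ} (hg : Injective g) (i : ι) :
    fiber (φ.precomp hg) i ⊆ fiber φ i :=
  range_comp_subset_range g fun k => φ.1 (i, k)

section Staircase

variable [Fintype ι] (F : ℕ → ι → Set ℕ) (hF : ∀ m i, (F m i).Infinite)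

noncomputable def stair : ℕ → ι → ℕ
  | 0, i => ((hF 0 i).exists_gt 0).choose
  | m + 1, i => ((hF (m + 1) i).exists_gt (Finset.univ.sup (stair m))).choose

lemma stair_mem (m : ℕ) (i : ι) : stair F hF m i ∈ F m i := by
  cases m with
  | zero => exact ((hF 0 i).exists_gt 0).choose_spec.1
  | succ m => exact ((hF (m + 1) i).exists_gt _).choose_spec.1

lemma stair_lt_stair_succ (m : ℕ) (i j : ι) : stair F hF m i < stair F hF (m + 1) j :=
  (Finset.le_sup (Finset.mem_univ i)).trans_lt ((hF (m + 1) j).exists_gt _).choose_spec.2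

lemma stair_lt_stair {m l : ℕ} (h : m < l) (i j : ι) : stair F hF m i < stair F hF l j := by
  induction l, h using Nat.le_induction generalizing j with
  | base => exact stair_lt_stair_succ F hF m i j
  | succ l _ ih => exact (ih j).trans (stair_lt_stair_succ F hF l j j)

lemma stair_injective (hdisj : ∀ m, Pairwise (Disjoint on F m)) :
    Injective fun p : ι × ℕ => stair F hF p.2 p.1 := by
  rintro ⟨i, m⟩ ⟨j, l⟩ (h : stair F hF m i = stair F hF l j)
  obtain rfl : m = l := by
    rcases lt_trichotomy m l with hlt | heq | hlt
    · exact absurd h (stair_lt_stair F hF hlt i j).ne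
    · exact heq
    · exact absurd h (stair_lt_stair F hF hlt j i).ne'
  suffices i = j by rw [this]
  by_contra hij
  exact Set.disjoint_left.mp (hdisj m hij) (stair_mem F hF m i) (h ▸ stair_mem F hF m j)

end Staircase

lemma exists_common_refinement [Fintype ι] (φ ψ : Inj ι) :
    ∃ Φ χ χ' : Inj ι, (∀ i, fiber χ i ⊆ fiber φ i ∧ fiber χ i ⊆ fiber Φ i) ∧
      ∀ i, fiber χ' i ⊆ fiber ψ i ∧ fiber χ' i ⊆ fiber Φ i := by
  let F : ℕ → ι → Set ℕ := fun m => if Even m then fiber φ else fiber ψ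
  have hF : ∀ m i, (F m i).Infinite := fun m i => by
    dsimp only [F]; split_ifs <;> apply fiber_infinite
  have hdisj : ∀ m, Pairwise (Disjoint on F m) := fun m => by
    dsimp only [F]; split_ifs <;> apply pairwise_disjoint_fiber
  let Φ : Inj ι := ⟨fun p => stair F hF p.2 p.1, stair_injective F hF hdisj⟩
  have hev : Injective fun k : ℕ => 2 * k := fun _ _ h => by simpa using h
  have hodd : Injective fun k : ℕ => 2 * k + 1 := fun _ _ h => by simpa using h
  refine ⟨Φ, Φ.precomp hev, Φ.precomp hodd, fun i => ⟨?_, fiber_precomp_subset Φ hev i⟩,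
    fun i => ⟨?_, fiber_precomp_subset Φ hodd i⟩⟩
  · rintro _ ⟨k, rfl⟩
    simpa [F, Φ, Inj.precomp] using stair_mem F hF (2 * k) i
  · rintro _ ⟨k, rfl⟩
    simpa [F, Φ, Inj.precomp] using stair_mem F hF (2 * k + 1) i

end InjSumNat

open InjSumNat

theorem stmt_17 (n : ℕ) (φ ψ : {φ : Fin n × ℕ → ℕ // Function.Injective φ}) :
    Relation.EqvGen
      (fun φ ψ : {φ : Fin n × ℕ → ℕ // Function.Injective φ} =>
        ∃ f : Fin n → M, ψ.1 = fun p => φ.1 (p.1, (f p.1).1 p.2)) φ ψ := by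
  obtain ⟨Φ, χ, χ', hχ, hχ'⟩ := exists_common_refinement φ ψ
  have hφχ : Rel φ χ := rel_of_fiber_subset fun i => (hχ i).1
  have hΦχ : Rel Φ χ := rel_of_fiber_subset fun i => (hχ i).2
  have hψχ' : Rel ψ χ' := rel_of_fiber_subset fun i => (hχ' i).1
  have hΦχ' : Rel Φ χ' := rel_of_fiber_subset fun i => (hχ' i).2
  open Relation.EqvGen in
  exact trans _ _ _ (rel _ _ hφχ) <| trans _ _ _ (symm _ _ (rel _ _ hΦχ)) <|
    trans _ _ _ (rel _ _ hΦχ') (symm _ _ (rel _ _ hψχ'))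
end

section
/- Let X be a set with an action of the monoid M^{1+n} (equivalently, 1+n commuting M-actions). Suppose x ∈ X is k-supported on a co-infinite set A (i.e., fixed by i_k(u) for every u ∈ M fixing A pointwise, where i_k is inclusion into the (1+k)-th factor). Then for every tuple (u_0,...,u_n) ∈ M^{1+n}, the element (u_0,...,u_n).x is k-supported on u_k(A). -/
/-- `x` is `k`-supported on `A`: it is fixed by `i k u` for every injection `u`
fixing `A` pointwise, where `i k` inserts into the `(1+k)`-th factor of `M^{1+n}`. -/
def KSupported {n : ℕ} {X : Type*} [MulAction (Fin (n+1) → M) X]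
    (k : Fin (n+1)) (A : Set ℕ) (x : X) : Prop :=
  ∀ u : M, (∀ a ∈ A, u.1 a = a) →
    (fun j => if j = k then u else 1 : Fin (n+1) → M) • x = x

/-- Insertion of a single injection into the `k`-th coordinate. -/
def ins {n : ℕ} (k : Fin (n+1)) (z : M) : Fin (n+1) → M :=
  fun j => if j = k then z else 1

lemma ins_mul {n : ℕ} (k : Fin (n+1)) (a b : M) :
    ins k a * ins k b = ins k (a * b) := by
  funext j; by_cases h : j = k <;> simp [ins, h]

/-- Key combinatorial construction: given a co-infinite set `A` and an injection `g`,
there is an injection `e` fixing `A` pointwise and a bijection `p` agreeing with `g`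
on the range of `e` (hence on `A`). -/
lemma exists_perm (A : Set ℕ) (hA : (Aᶜ : Set ℕ).Infinite) (g : M) :
    ∃ e p : M, ∃ pinv : ℕ → ℕ,
      (∀ a ∈ A, e.1 a = a) ∧ (p.1 ∘ e.1 = g.1 ∘ e.1) ∧ (∀ a ∈ A, p.1 a = g.1 a) ∧
      Function.LeftInverse pinv p.1 ∧ Function.RightInverse pinv p.1 := by
  classical
  haveI := hA.to_subtype
  obtain ⟨dC⟩ := nonempty_denumerable (↥(Aᶜ : Set ℕ))
  let φ : ℕ ≃ ↥(Aᶜ : Set ℕ) := (Denumerable.eqv _).symm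
  -- the injection e
  let ef : ℕ → ℕ := fun x => if h : x ∈ (Aᶜ : Set ℕ) then (φ (2 * φ.symm ⟨x, h⟩) : ℕ) else x
  have hefA : ∀ a ∈ A, ef a = a := by
    intro a ha
    simp only [ef, dif_neg (by simpa using ha : a ∉ (Aᶜ : Set ℕ))]
  have hefC : ∀ x (h : x ∈ (Aᶜ : Set ℕ)), ef x = (φ (2 * φ.symm ⟨x, h⟩) : ℕ) := by
    intro x h; simp only [ef, dif_pos h]
  have einj : Function.Injective ef := by
    intro x₁ x₂ hEq
    by_cases h₁ : x₁ ∈ (Aᶜ : Set ℕ) <;> by_cases h₂ : x₂ ∈ (Aᶜ : Set ℕ)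
    · rw [hefC x₁ h₁, hefC x₂ h₂] at hEq
      have := φ.injective (Subtype.coe_injective hEq)
      have h2 : φ.symm ⟨x₁, h₁⟩ = φ.symm ⟨x₂, h₂⟩ := by omega
      have := φ.symm.injective h2
      exact congrArg Subtype.val this
    · rw [hefC x₁ h₁] at hEq
      simp only [ef, dif_neg h₂] at hEq
      exact absurd (hEq ▸ (φ (2 * φ.symm ⟨x₁, h₁⟩)).2) h₂
    · rw [hefC x₂ h₂] at hEq
      simp only [ef, dif_neg h₁] at hEq
      exact absurd (hEq ▸ (φ (2 * φ.symm ⟨x₂, h₂⟩)).2) h₁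
    · simpa only [ef, dif_neg h₁, dif_neg h₂] using hEq
  set S : Set ℕ := Set.range ef with hS
  have hodd : ∀ n : ℕ, (φ (2 * n + 1) : ℕ) ∈ Sᶜ := by
    intro m
    intro hmem
    obtain ⟨x, hx⟩ := hmem
    by_cases h : x ∈ (Aᶜ : Set ℕ)
    · rw [hefC x h] at hx
      have := φ.injective (Subtype.coe_injective hx)
      omega
    · simp only [ef, dif_neg h] at hx
      exact h (hx ▸ (φ (2 * m + 1)).2)
  have hoddinj : Function.Injective fun m : ℕ => (φ (2 * m + 1) : ℕ) := by
    intro a b hab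
    have := φ.injective (Subtype.coe_injective hab)
    omega
  have hSc : (Sᶜ : Set ℕ).Infinite :=
    Set.infinite_of_injective_forall_mem hoddinj hodd
  have hR : ((g.1 '' S)ᶜ : Set ℕ).Infinite := by
    have : Function.Injective fun m : ℕ => g.1 ((φ (2 * m + 1) : ℕ)) := g.2.comp hoddinj
    refine Set.infinite_of_injective_forall_mem this ?_
    intro m hmem
    obtain ⟨s, hs, hgs⟩ := hmem
    have : s ∈ Sᶜ := (g.2 hgs) ▸ hodd m
    exact this hs
  haveI := hSc.to_subtype
  haveI := hR.to_subtype
  obtain ⟨d₁⟩ := nonempty_denumerable (↥(Sᶜ : Set ℕ))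
  obtain ⟨d₂⟩ := nonempty_denumerable (↥((g.1 '' S)ᶜ : Set ℕ))
  let σ : ↥(Sᶜ : Set ℕ) ≃ ↥((g.1 '' S)ᶜ : Set ℕ) :=
    (Denumerable.eqv _).trans (Denumerable.eqv _).symm
  let pf : ℕ → ℕ := fun x => if h : x ∈ S then g.1 x else (σ ⟨x, h⟩ : ℕ)
  have hpfS : ∀ x ∈ S, pf x = g.1 x := fun x h => dif_pos h
  have hpfC : ∀ x (h : x ∉ S), pf x = (σ ⟨x, h⟩ : ℕ) := fun x h => dif_neg h
  have pinj : Function.Injective pf := by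
    intro x₁ x₂ hEq
    by_cases h₁ : x₁ ∈ S <;> by_cases h₂ : x₂ ∈ S
    · rw [hpfS x₁ h₁, hpfS x₂ h₂] at hEq; exact g.2 hEq
    · rw [hpfS x₁ h₁, hpfC x₂ h₂] at hEq
      exact absurd (hEq ▸ ⟨x₁, h₁, rfl⟩) (σ ⟨x₂, h₂⟩).2
    · rw [hpfC x₁ h₁, hpfS x₂ h₂] at hEq
      exact absurd (hEq ▸ ⟨x₂, h₂, rfl⟩) (σ ⟨x₁, h₁⟩).2
    · rw [hpfC x₁ h₁, hpfC x₂ h₂] at hEq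
      have := σ.injective (Subtype.coe_injective hEq)
      exact congrArg Subtype.val this
  have psurj : Function.Surjective pf := by
    intro z
    by_cases hz : z ∈ g.1 '' S
    · obtain ⟨x, hx, rfl⟩ := hz
      exact ⟨x, hpfS x hx⟩
    · refine ⟨(σ.symm ⟨z, hz⟩ : ℕ), ?_⟩
      have hmem : (σ.symm ⟨z, hz⟩ : ℕ) ∉ S := (σ.symm ⟨z, hz⟩).2
      rw [hpfC _ hmem]
      have : σ ⟨(σ.symm ⟨z, hz⟩ : ℕ), hmem⟩ = σ (σ.symm ⟨z, hz⟩) := rfl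
      rw [this, σ.apply_symm_apply]
  let P : ℕ ≃ ℕ := Equiv.ofBijective pf ⟨pinj, psurj⟩
  refine ⟨⟨ef, einj⟩, ⟨pf, pinj⟩, ⇑P.symm, hefA, ?_, ?_, ?_, ?_⟩
  · funext x
    exact hpfS (ef x) ⟨x, rfl⟩
  · intro a ha
    have : a ∈ S := ⟨a, hefA a ha⟩
    exact hpfS a this
  · intro x; exact P.symm_apply_apply x
  · intro x; exact P.apply_symm_apply x

theorem stmt_18 {n : ℕ} {X : Type*} [MulAction (Fin (n+1) → M) X]
    (k : Fin (n+1)) (A : Set ℕ) (hA : (Aᶜ : Set ℕ).Infinite)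
    (x : X) (hx : KSupported k A x) (u : Fin (n+1) → M) :
    KSupported k ((u k).1 '' A) (u • x) := by
  intro v hv
  set g : M := u k with hg
  obtain ⟨e, p, pinv, heA, hpe, hpA, hlp, hrp⟩ := exists_perm A hA g
  have hw_inj : Function.Injective (pinv ∘ v.1 ∘ p.1) :=
    hrp.injective.comp (v.2.comp p.2)
  set w : M := ⟨pinv ∘ v.1 ∘ p.1, hw_inj⟩ with hw
  have hwA : ∀ a ∈ A, w.1 a = a := by
    intro a ha
    show pinv (v.1 (p.1 a)) = a
    rw [hpA a ha, hv _ ⟨a, ha, rfl⟩, ← hpA a ha, hlp]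
  have hvp : v.1 ∘ p.1 = p.1 ∘ w.1 := by
    funext z
    show v.1 (p.1 z) = p.1 (pinv (v.1 (p.1 z)))
    rw [hrp]
  -- decompose u
  set u₀ : Fin (n+1) → M := fun j => if j = k then 1 else u j with hu₀
  have hu : u = ins k g * u₀ := by
    funext j
    by_cases h : j = k <;> simp [ins, hu₀, h, hg]
  have hcomm : ∀ z : M, ins k z * u₀ = u₀ * ins k z := by
    intro z; funext j
    by_cases h : j = k <;> simp [ins, hu₀, h]
  set y : X := u₀ • x with hy0
  have hy : ∀ z : M, (∀ a ∈ A, z.1 a = a) → ins k z • y = y := by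
    intro z hz
    calc ins k z • (u₀ • x) = (ins k z * u₀) • x := (mul_smul _ _ _).symm
      _ = (u₀ * ins k z) • x := by rw [hcomm]
      _ = u₀ • (ins k z • x) := mul_smul _ _ _
      _ = u₀ • x := by rw [show ins k z • x = x from hx z hz]
  have hux : u • x = ins k g • y := by rw [hu, mul_smul]
  have hge : g * e = p * e := by
    apply Subtype.ext
    show g.1 * e.1 = p.1 * e.1
    exact hpe.symm
  have hweA : ∀ a ∈ A, (w * e).1 a = a := by
    intro a ha
    show w.1 (e.1 a) = a
    rw [heA a ha, hwA a ha]
  have hvge : v * (g * e) = p * (w * e) := by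
    apply Subtype.ext
    show v.1 * (g.1 * e.1) = p.1 * (w.1 * e.1)
    show v.1 ∘ (g.1 ∘ e.1) = p.1 ∘ (w.1 ∘ e.1)
    rw [← hpe]
    exact funext fun z => congrFun hvp (e.1 z)
  show ins k v • (u • x) = u • x
  rw [hux]
  calc ins k v • (ins k g • y)
      = (ins k v * ins k g) • y := (mul_smul _ _ _).symm
    _ = ins k (v * g) • y := by rw [ins_mul]
    _ = ins k (v * g) • (ins k e • y) := by rw [hy e heA]
    _ = (ins k (v * g) * ins k e) • y := (mul_smul _ _ _).symm
    _ = ins k (v * g * e) • y := by rw [ins_mul]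
    _ = ins k (p * (w * e)) • y := by rw [mul_assoc, hvge]
    _ = (ins k p * ins k (w * e)) • y := by rw [ins_mul]
    _ = ins k p • (ins k (w * e) • y) := mul_smul _ _ _
    _ = ins k p • y := by rw [hy (w * e) hweA]
    _ = ins k p • (ins k e • y) := by rw [hy e heA]
    _ = ins k (p * e) • y := by rw [← mul_smul, ins_mul]
    _ = ins k (g * e) • y := by rw [hge]
    _ = ins k g • (ins k e • y) := by rw [← ins_mul, mul_smul]
    _ = ins k g • y := by rw [hy e heA]
end

section
/- Let X be a set with an M^{1+n}-action such that every element is k-supported on some co-infinite set for each k. Let x ∈ X, (u_0,...,u_n) ∈ M^{1+n}, and A ⊆ ω co-infinite such that (u_0,...,u_n).x is k-supported on u_k(A). Then x is k-supported on A. -/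
open Function Set

lemma Function.Injective.extend_of_disjoint {α β γ : Type*} {f : α → β} {g : α → γ}
    {e' : β → γ} (hf : Injective f) (hg : Injective g) (he' : InjOn e' (range f)ᶜ)
    (hdisj : Disjoint (range g) (e' '' (range f)ᶜ)) : Injective (extend f g e') := by
  have hout : ∀ a b, b ∉ range f → g a ≠ e' b := fun a b hb hab =>
    hdisj.ne_of_mem (mem_range_self a) (mem_image_of_mem e' hb) hab
  intro b₁ b₂ h
  by_cases h₁ : b₁ ∈ range f <;> by_cases h₂ : b₂ ∈ range f
  · obtain ⟨a₁, rfl⟩ := h₁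
    obtain ⟨a₂, rfl⟩ := h₂
    rw [hf.extend_apply, hf.extend_apply] at h
    rw [hg h]
  · obtain ⟨a₁, rfl⟩ := h₁
    rw [hf.extend_apply, extend_apply' _ _ _ h₂] at h
    exact absurd h (hout a₁ b₂ h₂)
  · obtain ⟨a₂, rfl⟩ := h₂
    rw [hf.extend_apply, extend_apply' _ _ _ h₁] at h
    exact absurd h.symm (hout a₂ b₁ h₁)
  · rw [extend_apply' _ _ _ h₁, extend_apply' _ _ _ h₂] at h
    exact he' h₁ h₂ h

lemma Set.Infinite.exists_disjoint_infinite_subsets_s19 {α : Type*} {S T : Set α}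
    (hS : S.Infinite) (hT : T.Infinite) :
    ∃ P ⊆ S, ∃ Q ⊆ T, P.Infinite ∧ Q.Infinite ∧ Disjoint P Q := by
  by_cases hST : (S \ T).Infinite
  · exact ⟨S \ T, sdiff_subset, T, subset_rfl, hST, hT, disjoint_sdiff_left⟩
  have hinter : (S ∩ T).Infinite := by
    simpa [sdiff_sdiff_right_self] using hS.sdiff (not_infinite.mp hST)
  obtain ⟨P, Q, hPQ, hdisj, hcard⟩ := hinter.exists_union_disjoint_cardinal_eq_of_infinite
  have hP : P.Infinite := by
    rcases infinite_union.mp (hPQ ▸ hinter) with hP | hQ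
    · exact hP
    · rw [← infinite_coe_iff, Cardinal.infinite_iff, hcard, ← Cardinal.infinite_iff]
      exact hQ.to_subtype
  have hQ : Q.Infinite := by
    rw [← infinite_coe_iff, Cardinal.infinite_iff, ← hcard, ← Cardinal.infinite_iff]
    exact hP.to_subtype
  exact ⟨P, fun a ha => (hPQ ▸ mem_union_left Q ha).1, Q,
    fun a ha => (hPQ ▸ mem_union_right P ha).2, hP, hQ, hdisj⟩

lemma comp_comm_of_disjoint {α : Type*} {e f : α → α} {P Q : Set α}
    (he : EqOn e id Pᶜ) (hf : EqOn f id Qᶜ) (heP : MapsTo e P P) (hfQ : MapsTo f Q Q)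
    (hPQ : Disjoint P Q) : e ∘ f = f ∘ e := by
  funext a
  by_cases haP : a ∈ P
  · have hnQ : ∀ {b}, b ∈ P → b ∉ Q := fun hb => hPQ.notMem_of_mem_left hb
    simp [hf (hnQ haP), hf (hnQ (heP haP))]
  · by_cases haQ : a ∈ Q
    · have hnP : ∀ {b}, b ∈ Q → b ∉ P := fun hb => hPQ.notMem_of_mem_right hb
      simp [he haP, he (hnP (hfQ haQ))]
    · simp [he haP, hf haQ]

namespace M

lemma exists_mul_eq_of_compl_range_infinite (u c : M) (hc : (range c.1)ᶜ.Infinite) :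
    ∃ a : M, a * u = c := by
  let θ := hc.natEmbedding
  have ha : Injective (extend u.1 c.1 fun b => θ b) := by
    refine u.2.extend_of_disjoint c.2 (fun b _ b' _ h => θ.injective (Subtype.ext h)) ?_
    rw [disjoint_right]
    rintro _ ⟨b, -, rfl⟩
    exact (θ b).2
  exact ⟨⟨_, ha⟩, Subtype.ext (extend_comp u.2 c.1 fun b => θ b)⟩

lemma exists_eqOn_id_compl_mapsTo_compl_range_infinite {P : Set ℕ} (hP : P.Infinite) :
    ∃ e : M, EqOn e.1 id Pᶜ ∧ MapsTo e.1 P P ∧ (range e.1)ᶜ.Infinite := by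
  let φ : ℕ → ℕ := fun m => (hP.natEmbedding _ m).1
  have hφ : Injective φ := fun _ _ h => hP.natEmbedding.injective (Subtype.ext h)
  have hφP : ∀ m, φ m ∈ P := fun m => (hP.natEmbedding _ m).2
  have hφ2 : Injective fun m => φ (2 * m) := fun _ _ h => by have := hφ h; omega
  set e := extend φ (fun m => φ (2 * m)) id
  have he_out : ∀ b, b ∉ range φ → e b = b := fun b hb => extend_apply' _ _ _ hb
  have he : Injective e := by
    refine hφ.extend_of_disjoint hφ2 (injOn_id _) ?_
    rw [image_id]
    exact disjoint_compl_right.mono_left (range_comp_subset_range _ φ)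
  refine ⟨⟨e, he⟩, fun b hb => he_out b fun ⟨m, hm⟩ => hb (hm ▸ hφP m), ?_, ?_⟩
  · intro b hb
    by_cases hbφ : b ∈ range φ
    · obtain ⟨m, rfl⟩ := hbφ
      simpa only [e, hφ.extend_apply] using hφP (2 * m)
    · simpa only [he_out b hbφ] using hb
  · refine infinite_of_injective_forall_mem (f := fun m => φ (2 * m + 1))
      (fun _ _ h => by have := hφ h; omega) ?_
    rintro m ⟨b, hb⟩
    change e b = _ at hb
    by_cases hbφ : b ∈ range φ
    · obtain ⟨m', rfl⟩ := hbφ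
      have := hφ (hb.symm.trans (hφ.extend_apply _ _ m'))
      omega
    · rw [he_out b hbφ] at hb
      exact hbφ ⟨_, hb.symm⟩

lemma exists_mul_eq_mul_of_eqOn (u : M) {v : M} {A : Set ℕ} (hv : EqOn v.1 id A) :
    ∃ w : M, EqOn w.1 id (u.1 '' A) ∧ u * v = w * u := by
  have hw : Injective (extend u.1 (u.1 ∘ v.1) id) := by
    refine u.2.extend_of_disjoint (u.2.comp v.2) (injOn_id _) ?_
    rw [image_id]
    exact disjoint_compl_right.mono_left (range_comp_subset_range _ _)
  refine ⟨⟨_, hw⟩, ?_, Subtype.ext (extend_comp u.2 _ _).symm⟩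
  rintro _ ⟨a, ha, rfl⟩
  change extend u.1 (u.1 ∘ v.1) id (u.1 a) = u.1 a
  rw [u.2.extend_apply]
  exact congrArg u.1 (hv ha)

end M

section KSupported

variable {n : ℕ} {X : Type*} [MulAction (Fin (n+1) → M) X]

lemma kSupported_iff_mulSingle {k : Fin (n+1)} {A : Set ℕ} {x : X} :
    KSupported k A x ↔
      ∀ v : M, EqOn v.1 id A → (Pi.mulSingle k v : Fin (n+1) → M) • x = x := by
  have hsingle : ∀ v : M, Pi.mulSingle k v = fun j => if j = k then v else 1 := fun v => by
    funext j
    exact Pi.mulSingle_apply k v j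
  simp only [hsingle]
  rfl

lemma smul_eq_self_of_kSupported {y : X} {B : Fin (n+1) → Set ℕ}
    (hB : ∀ j, KSupported j (B j) y) {E : Fin (n+1) → M} (hE : ∀ j, EqOn (E j).1 id (B j)) :
    E • y = y := by
  rw [← Finset.noncommProd_mulSingle E]
  exact Submonoid.noncommProd_mem (MulAction.stabilizerSubmonoid _ y) _ _ _
    fun j _ => kSupported_iff_mulSingle.mp (hB j) (E j) (hE j)

set_option synthInstance.maxHeartbeats 100000 in
lemma smul_eq_smul_of_compl_range_infinite {u c : Fin (n+1) → M} {y z : X} (h : u • y = u • z)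
    (hc : ∀ j, (range (c j).1)ᶜ.Infinite) : c • y = c • z := by
  choose a ha using fun j => M.exists_mul_eq_of_compl_range_infinite (u j) (c j) (hc j)
  have hc : a * u = c := funext ha
  rw [← hc, mul_smul, mul_smul, h]

lemma injective_smul_of_forall_exists_kSupported
    (hmild : ∀ (x : X) (k : Fin (n+1)), ∃ A : Set ℕ, Aᶜ.Infinite ∧ KSupported k A x)
    (u : Fin (n+1) → M) : Injective (u • · : X → X) := by
  intro y z h
  choose B hBinf hB using hmild y
  choose C hCinf hC using hmild z
  choose P hPB Q hQC hP hQ hPQ using fun j => (hBinf j).exists_disjoint_infinite_subsets_s19 (hCinf j)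
  choose E hEid hEP hEco using fun j => M.exists_eqOn_id_compl_mapsTo_compl_range_infinite (hP j)
  choose F hFid hFQ hFco using fun j => M.exists_eqOn_id_compl_mapsTo_compl_range_infinite (hQ j)
  have hEy : E • y = y := smul_eq_self_of_kSupported hB fun j =>
    (hEid j).mono (subset_compl_comm.mp (hPB j))
  have hFz : F • z = z := smul_eq_self_of_kSupported hC fun j =>
    (hFid j).mono (subset_compl_comm.mp (hQC j))
  have hEz : E • z = y := (smul_eq_smul_of_compl_range_infinite h hEco).symm.trans hEy
  have hFy : F • y = z := (smul_eq_smul_of_compl_range_infinite h hFco).trans hFz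
  have hcomm : E * F = F * E := funext fun j =>
    Subtype.ext (comp_comm_of_disjoint (hEid j) (hFid j) (hEP j) (hFQ j) (hPQ j))
  have hEFco : ∀ j, (range ((E * F) j).1)ᶜ.Infinite := fun j =>
    (hEco j).mono (compl_subset_compl.mpr (range_comp_subset_range (F j).1 (E j).1))
  calc y = (E * F) • y := by rw [mul_smul, hFy, hEz]
    _ = (E * F) • z := smul_eq_smul_of_compl_range_infinite h hEFco
    _ = z := by rw [hcomm, mul_smul, hEz, hFy]

end KSupported

theorem stmt_19_general {n : ℕ} {X : Type*} [MulAction (Fin (n+1) → M) X]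
    (hmild : ∀ (x : X) (k : Fin (n+1)), ∃ A : Set ℕ, (Aᶜ : Set ℕ).Infinite ∧ KSupported k A x)
    (x : X) (u : Fin (n+1) → M) (k : Fin (n+1)) (A : Set ℕ)
    (h : KSupported k ((u k).1 '' A) (u • x)) :
    KSupported k A x := by
  rw [kSupported_iff_mulSingle] at h ⊢
  intro v hv
  obtain ⟨w, hw, hwu⟩ := M.exists_mul_eq_mul_of_eqOn (u k) hv
  have hcomm : u * Pi.mulSingle k v = Pi.mulSingle k w * u := by
    funext j
    rcases eq_or_ne j k with rfl | hj
    · simpa using hwu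
    · simp [hj]
  apply injective_smul_of_forall_exists_kSupported hmild u
  beta_reduce
  rw [← mul_smul, hcomm, mul_smul, h w hw]

theorem stmt_19 {n : ℕ} {X : Type*} [MulAction (Fin (n+1) → M) X]
    (hmild : ∀ (x : X) (k : Fin (n+1)), ∃ A : Set ℕ, (Aᶜ : Set ℕ).Infinite ∧ KSupported k A x)
    (x : X) (u : Fin (n+1) → M) (k : Fin (n+1)) (A : Set ℕ)
    (hA : (Aᶜ : Set ℕ).Infinite)
    (h : KSupported k ((u k).1 '' A) (u • x)) :
    KSupported k A x :=
  stmt_19_general hmild x u k A h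
end
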